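/- arXiv:1411.6732 — 9 statements merged into one kernel-verified Lean document; each statement's English description precedes it below -/
import Mathlib

section
/- Let G be a finite group and S a symmetric generating set of G. If φ is a colour-preserving automorphism of the connected Cayley graph Cay(G;S) fixing the identity element e, then the order of φ is a power of 2. -/
/-- A map `φ` is colour-preserving for the Cayley graph `Cay(G;S)` if it sends each
edge `x — xs` (coloured `{s,s⁻¹}`) to an edge of the same colour. -/
def ColourPreserving {G : Type*} [Group G] (S : Set G) (φ : G → G) : Prop :=
  ∀ x : G, ∀ s ∈ S, φ (x * s) = φ x * s ∨ φ (x * s) = φ x * s⁻¹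

/-- A map `φ` is colour-permuting for `Cay(G;S)` if it permutes the edge colours:
there is a permutation `π` of `S` with `π (s⁻¹) = (π s)⁻¹` and
`φ(xs) ∈ {φ(x) π(s)^{±1}}`. -/
def ColourPermuting {G : Type*} [Group G] (S : Set G) (φ : G → G) : Prop :=
  ∃ π : G → G, Set.BijOn π S S ∧ (∀ s ∈ S, π s⁻¹ = (π s)⁻¹) ∧
    ∀ x : G, ∀ s ∈ S, φ (x * s) = φ x * π s ∨ φ (x * s) = φ x * (π s)⁻¹

/-- `φ : G → G` is affine if it is a group automorphism composed with a left translation. -/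
def IsAffineMap {G : Type*} [Group G] (φ : G → G) : Prop :=
  ∃ (α : G ≃* G) (g : G), ∀ x, φ x = α (g * x)

/-- `G` is CCA if every colour-preserving automorphism of every connected Cayley graph
on `G` is affine. -/
def IsCCA (G : Type*) [Group G] : Prop :=
  ∀ S : Set G, S⁻¹ = S → Subgroup.closure S = ⊤ →
    ∀ φ : Equiv.Perm G, ColourPreserving S ⇑φ → IsAffineMap ⇑φ

/-- `G` is strongly CCA if every colour-permuting automorphism of every connected
Cayley graph on `G` is affine. -/
def IsStronglyCCA (G : Type*) [Group G] : Prop :=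
  ∀ S : Set G, S⁻¹ = S → Subgroup.closure S = ⊤ →
    ∀ φ : Equiv.Perm G, ColourPermuting S ⇑φ → IsAffineMap ⇑φ

/-!
Let `ψ` be a colour-preserving permutation of odd order fixing a vertex `x`. For `s ∈ S`,
`ψ` maps the two neighbours `xs`, `xs⁻¹` of colour `{s, s⁻¹}` into that pair, so it either
fixes both or swaps them; a swap is impossible for a permutation of odd order. By
connectedness `ψ` fixes every vertex. If the order `n` of `φ` had an odd prime factor `p`,
then `φ ^ (n / p)` would be such a `ψ` of order `p`, hence trivial.
-/

open Function

namespace Equiv.Perm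

variable {α : Type*} {σ : Perm α} {m : ℕ}

theorem apply_eq_self_of_apply_apply_eq_self (hm : Odd m) (hσ : σ ^ m = 1) {a : α}
    (ha : σ (σ a) = a) : σ a = a := by
  have h2 : IsPeriodicPt σ 2 a := ha
  have hm' : IsPeriodicPt σ m a := by
    simp [IsPeriodicPt, IsFixedPt, iterate_eq_pow, hσ]
  have h1 := h2.gcd hm'
  rwa [Nat.coprime_two_left.mpr hm] at h1

theorem apply_eq_self_of_mapsTo_pair (hm : Odd m) (hσ : σ ^ m = 1) {a b : α}
    (ha : σ a = a ∨ σ a = b) (hb : σ b = b ∨ σ b = a) : σ a = a ∧ σ b = b := by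
  have hσa : σ (σ a) = a := by
    rcases ha with ha | ha
    · rw [ha, ha]
    rcases hb with hb | hb
    · rw [← σ.injective (ha.trans hb.symm)] at ha
      rw [ha, ha]
    · rw [ha, hb]
  have hfix := apply_eq_self_of_apply_apply_eq_self hm hσ hσa
  refine ⟨hfix, ?_⟩
  rcases hb with hb | hb
  · exact hb
  · rw [σ.injective (hb.trans hfix.symm), hfix]

end Equiv.Perm

namespace ColourPreserving

variable {G : Type*} [Group G] {S : Set G}

theorem apply_mul_inv {φ : G → G} (hφ : ColourPreserving S φ) (x : G) {s : G} (hs : s ∈ S) :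
    φ (x * s⁻¹) = φ x * s⁻¹ ∨ φ (x * s⁻¹) = φ x * s := by
  rcases hφ (x * s⁻¹) s hs with h | h <;> rw [inv_mul_cancel_right] at h <;> rw [h]
  · simp
  · simp

theorem comp {φ ψ : G → G} (hφ : ColourPreserving S φ) (hψ : ColourPreserving S ψ) :
    ColourPreserving S (φ ∘ ψ) := by
  intro x s hs
  rcases hψ x s hs with h | h <;> simp only [comp_apply, h]
  · exact hφ (ψ x) s hs
  · exact (hφ.apply_mul_inv (ψ x) hs).symm

theorem pow {φ : Equiv.Perm G} (hφ : ColourPreserving S φ) (n : ℕ) :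
    ColourPreserving S ⇑(φ ^ n) := by
  induction n with
  | zero => intro x s _; simp
  | succ n ih => simpa only [pow_succ, Equiv.Perm.coe_mul] using ih.comp hφ

theorem apply_mul_eq_self_of_apply_eq_self {ψ : Equiv.Perm G} (hψ : ColourPreserving S ψ)
    {m : ℕ} (hm : Odd m) (hψm : ψ ^ m = 1) {x s : G} (hx : ψ x = x) (hs : s ∈ S) :
    ψ (x * s) = x * s ∧ ψ (x * s⁻¹) = x * s⁻¹ := by
  have h := hψ x s hs
  have h' := hψ.apply_mul_inv x hs
  rw [hx] at h h'
  exact Equiv.Perm.apply_eq_self_of_mapsTo_pair hm hψm h h'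

theorem eq_one_of_pow_eq_one_of_odd {ψ : Equiv.Perm G} (hψ : ColourPreserving S ψ)
    (hgen : Subgroup.closure S = ⊤) (hfix : ψ 1 = 1) {m : ℕ} (hm : Odd m)
    (hψm : ψ ^ m = 1) : ψ = 1 := by
  ext g
  have hg : g ∈ Subgroup.closure S := hgen ▸ Subgroup.mem_top g
  induction hg using Subgroup.closure_induction_right with
  | one => exact hfix
  | mul_right x _ s hs hx => exact (hψ.apply_mul_eq_self_of_apply_eq_self hm hψm hx hs).1
  | mul_inv_cancel x _ s hs hx => exact (hψ.apply_mul_eq_self_of_apply_eq_self hm hψm hx hs).2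

end ColourPreserving

theorem stmt_3_general {G : Type*} [Group G] [Finite G] (S : Set G)
    (hgen : Subgroup.closure S = ⊤) (φ : Equiv.Perm G)
    (hφ : ColourPreserving S ⇑φ) (hfix : φ 1 = 1) :
    ∃ k : ℕ, orderOf φ = 2 ^ k := by
  have hn : orderOf φ ≠ 0 := (orderOf_pos φ).ne'
  refine ⟨_, Nat.eq_prime_pow_of_unique_prime_dvd hn fun {p} hp hpn => ?_⟩
  by_contra hp2
  have hord := orderOf_pow_orderOf_div hn hpn
  have hpow := pow_orderOf_eq_one (φ ^ (orderOf φ / p))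
  rw [hord] at hpow
  have htriv := (hφ.pow _).eq_one_of_pow_eq_one_of_odd hgen
    (φ.pow_apply_eq_self_of_apply_eq_self hfix _) (hp.odd_of_ne_two hp2) hpow
  rw [htriv, orderOf_one] at hord
  exact hp.one_lt.ne hord

/-- A colour-preserving automorphism of a connected Cayley graph fixing the identity
has order a power of `2`. -/
theorem stmt_3 {G : Type*} [Group G] [Finite G] (S : Set G) (hS : S⁻¹ = S)
    (hgen : Subgroup.closure S = ⊤) (φ : Equiv.Perm G)
    (hφ : ColourPreserving S ⇑φ) (hfix : φ 1 = 1) :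
    ∃ k : ℕ, orderOf φ = 2 ^ k :=
  stmt_3_general S hgen φ hφ hfix
end

section
/- The quaternion group Q₈ is not CCA: the Cayley graph Cay(Q₈; {±i, ±j}) admits a colour-preserving automorphism fixing the identity that is not a group automorphism of Q₈. Concretely, the permutation interchanging k and −k and fixing all other elements is a colour-preserving automorphism of this Cayley graph but not an automorphism of Q₈. -/
/-!
In `Q₈` every `s ∈ {±i, ±j}` satisfies `s⁻¹ = -s` with `-1` central of order two. Hence any
map with `φ x = ±x` for all `x` sends the edge `x — xs` to `φ x — φ x · (±s)`, an edge of the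
same colour. Swapping `k` and `-k` is such a map; it fixes `1`, `i`, `j` but moves `k = ij`,
so it is not an automorphism, and an affine map fixing `1` would be one.
-/

section CCA

variable {G : Type*} [Group G]

theorem colourPreserving_of_eq_or_eq_mul {S : Set G} {φ : G → G} {z : G}
    (hz : z ∈ Subgroup.center G) (hzz : z * z = 1) (hS : ∀ s ∈ S, s⁻¹ = z * s)
    (hφ : ∀ x, φ x = x ∨ φ x = z * x) : ColourPreserving S φ := by
  intro x s hs
  rw [hS s hs, ← mul_assoc, Subgroup.mem_center_iff.1 hz (φ x)]
  rcases hφ (x * s) with h | h <;> rcases hφ x with h' | h' <;> rw [h, h'] <;>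
    simp only [mul_assoc, ← mul_assoc z z, hzz, one_mul, true_or, or_true]

theorem swap_apply_eq_or_eq_mul [DecidableEq G] {z a : G} (hzz : z * z = 1) (x : G) :
    Equiv.swap a (z * a) x = x ∨ Equiv.swap a (z * a) x = z * x := by
  rcases eq_or_ne x a with rfl | hxa
  · simp
  rcases eq_or_ne x (z * a) with rfl | hxza
  · simp [← mul_assoc, hzz]
  · simp [Equiv.swap_apply_of_ne_of_ne hxa hxza]

theorem IsAffineMap.exists_mulEquiv_of_map_one {φ : G → G} (hφ : IsAffineMap φ)
    (h1 : φ 1 = 1) : ∃ α : G ≃* G, φ = α := by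
  obtain ⟨α, g, hg⟩ := hφ
  obtain rfl : g = 1 := α.injective (by rw [← mul_one g, ← hg, h1, map_one])
  exact ⟨α, funext fun x => by rw [hg, one_mul]⟩

theorem not_isCCA_of_colourPreserving {S : Set G} (hS : S⁻¹ = S)
    (hSgen : Subgroup.closure S = ⊤) {φ : Equiv.Perm G} (hφ : ColourPreserving S φ)
    (h1 : φ 1 = 1) (hφα : ¬ ∃ α : G ≃* G, ⇑φ = ⇑α) : ¬ IsCCA G :=
  fun hG => hφα ((hG S hS hSgen φ hφ).exists_mulEquiv_of_map_one h1)

theorem not_exists_mulEquiv_of_map_mul_ne {φ : G → G} {x y : G}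
    (h : φ (x * y) ≠ φ x * φ y) : ¬ ∃ α : G ≃* G, φ = α := by
  rintro ⟨α, rfl⟩
  exact h (map_mul α x y)

theorem inv_insert_inv_insert_insert_inv (a b : G) :
    ({a, a⁻¹, b, b⁻¹} : Set G)⁻¹ = {a, a⁻¹, b, b⁻¹} := by
  simp only [Set.inv_insert, Set.inv_singleton, inv_inv, Set.insert_comm a⁻¹ a,
    Set.pair_comm b⁻¹ b]

end CCA

namespace QuaternionGroup

theorem closure_a_one_xa_zero (n : ℕ) [NeZero n] :
    Subgroup.closure {a 1, xa 0} = (⊤ : Subgroup (QuaternionGroup n)) := by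
  refine eq_top_iff.2 fun x _ => ?_
  have ha (m : ZMod (2 * n)) : a m ∈ Subgroup.closure {a 1, xa (0 : ZMod (2 * n))} := by
    rw [← ZMod.natCast_zmod_val m, ← a_one_pow]
    exact pow_mem (Subgroup.subset_closure (by simp)) _
  cases x with
  | a m => exact ha m
  | xa m =>
    rw [← zero_add m, ← xa_mul_a]
    exact mul_mem (Subgroup.subset_closure (by simp)) (ha m)

end QuaternionGroup

/-- `Q₈` is not CCA: swapping `k` and `−k = k⁻¹` (fixing everything else) is a
colour-preserving automorphism of `Cay(Q₈; {±i, ±j})` fixing the identity that is not a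
group automorphism. -/
theorem stmt_5 :
    let i : QuaternionGroup 2 := QuaternionGroup.a 1
    let j : QuaternionGroup 2 := QuaternionGroup.xa 0
    let k : QuaternionGroup 2 := i * j
    let S : Set (QuaternionGroup 2) := {i, i⁻¹, j, j⁻¹}
    let φ : Equiv.Perm (QuaternionGroup 2) := Equiv.swap k k⁻¹
    ColourPreserving S ⇑φ ∧ φ 1 = 1 ∧
      (¬ ∃ α : QuaternionGroup 2 ≃* QuaternionGroup 2, ⇑φ = ⇑α) ∧
      ¬ IsCCA (QuaternionGroup 2) := by
  intro i j k S φ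
  have hφ1 : φ 1 = 1 := by decide
  have hS : ∀ s ∈ S, s⁻¹ = QuaternionGroup.a 2 * s := by
    simp only [S, Set.mem_insert_iff, Set.mem_singleton_iff]
    rintro s (rfl | rfl | rfl | rfl) <;> decide
  have hφ : ColourPreserving S φ := by
    refine colourPreserving_of_eq_or_eq_mul (z := QuaternionGroup.a 2)
      (by decide) (by decide) hS ?_
    simpa [φ, show k⁻¹ = QuaternionGroup.a 2 * k by decide] using
      swap_apply_eq_or_eq_mul (a := k) (by decide)
  have hφα : ¬ ∃ α : QuaternionGroup 2 ≃* QuaternionGroup 2, ⇑φ = ⇑α :=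
    not_exists_mulEquiv_of_map_mul_ne (x := i) (y := j) (by decide)
  have hgen : Subgroup.closure S = ⊤ :=
    eq_top_iff.2 <| (QuaternionGroup.closure_a_one_xa_zero 2).ge.trans <|
      Subgroup.closure_mono (by simp [S, i, j, Set.insert_subset_iff])
  exact ⟨hφ, hφ1, hφα,
    not_isCCA_of_colourPreserving (inv_insert_inv_insert_insert_inv i j) hgen hφ hφ1 hφα⟩
end

section
/- The group ℤ₄ × ℤ₂ is not CCA: the permutation of ℤ₄ × ℤ₂ that interchanges (0,1) and (2,1) and fixes all other elements is a colour-preserving automorphism of Cay(ℤ₄×ℤ₂; {±(1,0), ±(1,1)}) that fixes the identity but is not a group automorphism. -/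
/-- Colour-preserving map for the Cayley graph of an additive group. -/
def ColourPreservingAdd {G : Type*} [AddGroup G] (S : Set G) (φ : G → G) : Prop :=
  ∀ x : G, ∀ s ∈ S, φ (x + s) = φ x + s ∨ φ (x + s) = φ x - s

/-- Affine map on an additive group: an automorphism composed with a translation. -/
def IsAffineAddMap {G : Type*} [AddGroup G] (φ : G → G) : Prop :=
  ∃ (α : G ≃+ G) (g : G), ∀ x, φ x = α (g + x)

/-- CCA property for additive groups. -/
def IsCCAAdd (G : Type*) [AddGroup G] : Prop :=
  ∀ S : Set G, -S = S → AddSubgroup.closure S = ⊤ →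
    ∀ φ : Equiv.Perm G, ColourPreservingAdd S ⇑φ → IsAffineAddMap ⇑φ

/-! A colour-preserving automorphism fixing `0` is affine only if it is additive, since the
translation part of `x ↦ α (g + x)` is forced to vanish. So one colour-preserving permutation
of a connected Cayley graph that fixes `0` and is not additive refutes CCA. For `ℤ₄ × ℤ₂` with
connection set `{±(1,0), ±(1,1)}`, the vertices `(0,1)` and `(2,1)` have the same neighbours,
joined by edges of the same colours, so swapping them preserves colours; and
`φ (0,1) + φ (1,0) = (3,1) ≠ (1,1) = φ (1,1)`. -/

theorem IsAffineAddMap.exists_addEquiv_of_map_zero {G : Type*} [AddGroup G] {φ : G → G}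
    (hφ : IsAffineAddMap φ) (h0 : φ 0 = 0) : ∃ α : G ≃+ G, φ = ⇑α := by
  obtain ⟨α, g, hg⟩ := hφ
  have hg0 : g = 0 := α.injective <| by rw [map_zero, ← add_zero g, ← hg, h0]
  exact ⟨α, funext fun x => by rw [hg, hg0, zero_add]⟩

theorem not_isCCAAdd_of_colourPreservingAdd {G : Type*} [AddGroup G] {S : Set G}
    (hS : -S = S) (hgen : AddSubgroup.closure S = ⊤) {φ : Equiv.Perm G}
    (hφ : ColourPreservingAdd S ⇑φ) (h0 : φ 0 = 0) (hadd : ¬ ∃ α : G ≃+ G, ⇑φ = ⇑α) :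
    ¬ IsCCAAdd G := fun hcca =>
  hadd ((hcca S hS hgen φ hφ).exists_addEquiv_of_map_zero h0)

namespace ZMod4Prod2

def connSet : Set (ZMod 4 × ZMod 2) := {(1,0), (3,0), (1,1), (3,1)}

def swapPerm : Equiv.Perm (ZMod 4 × ZMod 2) := Equiv.swap (0,1) (2,1)

theorem neg_connSet : -connSet = connSet := by
  ext x
  simp only [Set.mem_neg, connSet, Set.mem_insert_iff, Set.mem_singleton_iff]
  revert x
  decide

theorem closure_connSet : AddSubgroup.closure connSet = ⊤ := by
  rw [eq_top_iff]
  rintro ⟨a, b⟩ -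
  have h10 : ((1 : ZMod 4), (0 : ZMod 2)) ∈ AddSubgroup.closure connSet :=
    AddSubgroup.subset_closure (by simp [connSet])
  have h11 : ((1 : ZMod 4), (1 : ZMod 2)) ∈ AddSubgroup.closure connSet :=
    AddSubgroup.subset_closure (by simp [connSet])
  have h01 : ((0 : ZMod 4), (1 : ZMod 2)) ∈ AddSubgroup.closure connSet := by
    simpa using AddSubgroup.sub_mem _ h11 h10
  have hab : (a, b) =
      a.val • ((1 : ZMod 4), (0 : ZMod 2)) + b.val • ((0 : ZMod 4), (1 : ZMod 2)) := by
    revert a b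
    decide
  rw [hab]
  exact add_mem (nsmul_mem h10 _) (nsmul_mem h01 _)

theorem colourPreservingAdd_swapPerm : ColourPreservingAdd connSet ⇑swapPerm := by
  intro x s hs
  simp only [connSet, Set.mem_insert_iff, Set.mem_singleton_iff] at hs
  rcases hs with rfl | rfl | rfl | rfl <;> revert x <;> decide

theorem swapPerm_zero : swapPerm 0 = 0 := by decide

theorem not_exists_addEquiv_swapPerm :
    ¬ ∃ α : (ZMod 4 × ZMod 2) ≃+ (ZMod 4 × ZMod 2), ⇑swapPerm = ⇑α := by
  rintro ⟨α, hα⟩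
  have hadd : swapPerm ((0,1) + (1,0)) = swapPerm (0,1) + swapPerm (1,0) := by
    rw [hα]
    exact map_add α _ _
  revert hadd
  decide

end ZMod4Prod2

/-- `ℤ₄ × ℤ₂` is not CCA: swapping `(0,1)` and `(2,1)` (fixing everything else) is a
colour-preserving automorphism of `Cay(ℤ₄×ℤ₂; {±(1,0), ±(1,1)})` fixing the identity
that is not a group automorphism. -/
theorem stmt_6 :
    let S : Set (ZMod 4 × ZMod 2) := {(1,0), (3,0), (1,1), (3,1)}
    let φ : Equiv.Perm (ZMod 4 × ZMod 2) := Equiv.swap (0,1) (2,1)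
    ColourPreservingAdd S ⇑φ ∧ φ 0 = 0 ∧
      (¬ ∃ α : (ZMod 4 × ZMod 2) ≃+ (ZMod 4 × ZMod 2), ⇑φ = ⇑α) ∧
      ¬ IsCCAAdd (ZMod 4 × ZMod 2) :=
  open ZMod4Prod2 in
  ⟨colourPreservingAdd_swapPerm, swapPerm_zero, not_exists_addEquiv_swapPerm,
    not_isCCAAdd_of_colourPreservingAdd neg_connSet closure_connSet colourPreservingAdd_swapPerm
      swapPerm_zero not_exists_addEquiv_swapPerm⟩
end

section
/- If a finite group G₁ is not strongly CCA and G₂ is any finite group, then G₁ × G₂ is not strongly CCA. The same statement holds with 'CCA' in place of 'strongly CCA'. -/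
/-!
Extend a colour-permuting (resp. colour-preserving) automorphism `φ` of `Cay(G₁; S)` to
`φ × id` on `Cay(G₁ × G₂; S × {1} ∪ {1} × (G₂ \ {1}))`, with colour permutation `π` on the first
piece and the identity on the second; removing `1` from `G₂` makes the two pieces disjoint, so
this is well defined even when `1 ∈ S`. If `φ × id` were affine, `x ↦ α(g x)`, then
`x ↦ (φ 1)⁻¹ φ x` would be the restriction of `α` to `G₁ × {1}`, hence an automorphism, making
`φ` affine.
-/

open Set

section

variable {G₁ G₂ : Type*} [Group G₁] [Group G₂]

theorem IsAffineMap.of_prodMap_id {φ : G₁ → G₁} (hφ : Function.Bijective φ)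
    (h : IsAffineMap (Prod.map φ (id : G₂ → G₂))) : IsAffineMap φ := by
  obtain ⟨α, g, hα⟩ := h
  have hg : α g = (φ 1, 1) := by rw [← mul_one g, ← hα]; rfl
  have hα_inl : ∀ x : G₁, α (x, 1) = ((φ 1)⁻¹ * φ x, 1) := fun x => by
    calc α (x, 1) = (α g)⁻¹ * α (g * (x, 1)) := by rw [map_mul, inv_mul_cancel_left]
      _ = ((φ 1)⁻¹ * φ x, 1) := by rw [hg, ← hα]; simp
  let β : G₁ →* G₁ := (MonoidHom.fst G₁ G₂).comp (α.toMonoidHom.comp (MonoidHom.inl G₁ G₂))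
  have hβ : ∀ x, β x = (φ 1)⁻¹ * φ x := fun x => congrArg Prod.fst (hα_inl x)
  have hβ_bij : Function.Bijective β := by
    rw [show ⇑β = (fun y => (φ 1)⁻¹ * y) ∘ φ from funext hβ]
    exact (Group.mulLeft_bijective _).comp hφ
  let β' := MulEquiv.ofBijective β hβ_bij
  refine ⟨β', β'.symm (φ 1), fun x => ?_⟩
  rw [map_mul, MulEquiv.apply_symm_apply, MulEquiv.ofBijective_apply, hβ, mul_inv_cancel_left]

def prodConnectingSet (S : Set G₁) : Set (G₁ × G₂) :=
  {p | p.2 = 1 ∧ p.1 ∈ S ∨ p.2 ≠ 1 ∧ p.1 = 1}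

theorem inv_prodConnectingSet {S : Set G₁} (hS : S⁻¹ = S) :
    (prodConnectingSet S : Set (G₁ × G₂))⁻¹ = prodConnectingSet S := by
  ext p
  have hp : p.1⁻¹ ∈ S ↔ p.1 ∈ S := by rw [← Set.mem_inv, hS]
  simp only [prodConnectingSet, Set.mem_inv, Set.mem_ofPred_eq, Prod.fst_inv, Prod.snd_inv,
    ne_eq, inv_eq_one, hp]

theorem closure_prodConnectingSet {S : Set G₁} (hS : Subgroup.closure S = ⊤) :
    Subgroup.closure (prodConnectingSet S : Set (G₁ × G₂)) = ⊤ := by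
  set H := Subgroup.closure (prodConnectingSet S : Set (G₁ × G₂))
  have h_inl : ∀ a : G₁, (a, (1 : G₂)) ∈ H := by
    intro a
    have ha : MonoidHom.inl G₁ G₂ a ∈ (Subgroup.closure S).map (MonoidHom.inl G₁ G₂) :=
      Subgroup.mem_map_of_mem _ (hS ▸ Subgroup.mem_top a)
    rw [MonoidHom.map_closure] at ha
    refine Subgroup.closure_mono ?_ ha
    rintro _ ⟨s, hs, rfl⟩
    exact Or.inl ⟨rfl, hs⟩
  have h_inr : ∀ b : G₂, ((1 : G₁), b) ∈ H := by
    intro b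
    by_cases hb : b = 1
    · exact hb ▸ H.one_mem
    · exact Subgroup.subset_closure (Or.inr ⟨hb, rfl⟩)
  refine eq_top_iff.2 fun p _ => ?_
  simpa using H.mul_mem (h_inl p.1) (h_inr p.2)

theorem ColourPreserving.prodMap_id {S : Set G₁} {φ : G₁ → G₁} (hφ : ColourPreserving S φ) :
    ColourPreserving (prodConnectingSet S : Set (G₁ × G₂)) (Prod.map φ id) := by
  rintro ⟨x₁, x₂⟩ ⟨s₁, s₂⟩ (⟨rfl, hs⟩ | ⟨-, rfl⟩)
  · rcases hφ x₁ s₁ hs with h | h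
    · left; simp [h]
    · right; simp [h]
  · left; simp

open Classical in
noncomputable def prodColourPerm (π : G₁ → G₁) (p : G₁ × G₂) : G₁ × G₂ :=
  (if p.2 = 1 then π p.1 else p.1, p.2)

theorem bijOn_prodColourPerm {S : Set G₁} {π : G₁ → G₁} (hπ : BijOn π S S) :
    BijOn (prodColourPerm π) (prodConnectingSet S : Set (G₁ × G₂)) (prodConnectingSet S) := by
  refine ⟨?_, ?_, ?_⟩
  · rintro p (⟨hp₂, hp₁⟩ | ⟨hp₂, hp₁⟩)
    · exact Or.inl ⟨hp₂, by simpa [prodColourPerm, hp₂] using hπ.mapsTo hp₁⟩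
    · exact Or.inr ⟨hp₂, by simpa [prodColourPerm, hp₂] using hp₁⟩
  · rintro p (⟨hp₂, hp₁⟩ | ⟨hp₂, -⟩) q hq hpq <;>
      obtain ⟨hpq₁, hpq₂⟩ := Prod.ext_iff.1 hpq <;>
      simp only [prodColourPerm] at hpq₁ hpq₂
    · have hq₂ : q.2 = 1 := hpq₂ ▸ hp₂
      have hq₁ : q.1 ∈ S := by rcases hq with ⟨-, h⟩ | ⟨h, -⟩; exacts [h, absurd hq₂ h]
      rw [if_pos hp₂, if_pos hq₂] at hpq₁
      exact Prod.ext (hπ.injOn hp₁ hq₁ hpq₁) hpq₂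
    · rw [if_neg hp₂, if_neg (hpq₂ ▸ hp₂)] at hpq₁
      exact Prod.ext hpq₁ hpq₂
  · rintro q (⟨hq₂, hq₁⟩ | ⟨hq₂, hq₁⟩)
    · obtain ⟨s, hs, hsq⟩ := hπ.surjOn hq₁
      exact ⟨(s, 1), Or.inl ⟨rfl, hs⟩, Prod.ext (by simp [prodColourPerm, hsq]) hq₂.symm⟩
    · exact ⟨q, Or.inr ⟨hq₂, hq₁⟩, by simp [prodColourPerm, hq₂]⟩

theorem ColourPermuting.prodMap_id {S : Set G₁} {φ : G₁ → G₁} (hφ : ColourPermuting S φ) :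
    ColourPermuting (prodConnectingSet S : Set (G₁ × G₂)) (Prod.map φ id) := by
  obtain ⟨π, hπ, hπ_inv, hφπ⟩ := hφ
  refine ⟨prodColourPerm π, bijOn_prodColourPerm hπ, ?_, ?_⟩
  · rintro ⟨s₁, s₂⟩ (⟨rfl, hs⟩ | ⟨hs₂, rfl⟩)
    · simp [prodColourPerm, hπ_inv s₁ hs]
    · simp [prodColourPerm, hs₂]
  · rintro ⟨x₁, x₂⟩ ⟨s₁, s₂⟩ (⟨rfl, hs⟩ | ⟨hs₂, rfl⟩)
    · rcases hφπ x₁ s₁ hs with h | h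
      · left; simp [prodColourPerm, h]
      · right; simp [prodColourPerm, h]
    · left; simp [prodColourPerm, hs₂]

theorem IsStronglyCCA.of_prod (h : IsStronglyCCA (G₁ × G₂)) : IsStronglyCCA G₁ :=
  fun _ hS hgen φ hφ => IsAffineMap.of_prodMap_id φ.bijective <|
    h _ (inv_prodConnectingSet hS) (closure_prodConnectingSet hgen)
      (φ.prodCongr (Equiv.refl G₂)) hφ.prodMap_id

theorem IsCCA.of_prod (h : IsCCA (G₁ × G₂)) : IsCCA G₁ :=
  fun _ hS hgen φ hφ => IsAffineMap.of_prodMap_id φ.bijective <|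
    h _ (inv_prodConnectingSet hS) (closure_prodConnectingSet hgen)
      (φ.prodCongr (Equiv.refl G₂)) hφ.prodMap_id

end

theorem stmt_10_general {G₁ G₂ : Type*} [Group G₁] [Group G₂] :
    (¬ IsStronglyCCA G₁ → ¬ IsStronglyCCA (G₁ × G₂)) ∧
    (¬ IsCCA G₁ → ¬ IsCCA (G₁ × G₂)) :=
  ⟨mt IsStronglyCCA.of_prod, mt IsCCA.of_prod⟩

/-- If `G₁` is not (strongly) CCA, then neither is `G₁ × G₂`. -/
theorem stmt_10 {G₁ G₂ : Type*} [Group G₁] [Group G₂] [Finite G₁] [Finite G₂] :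
    (¬ IsStronglyCCA G₁ → ¬ IsStronglyCCA (G₁ × G₂)) ∧
    (¬ IsCCA G₁ → ¬ IsCCA (G₁ × G₂)) :=
  stmt_10_general
end

section
/- Let G₁, G₂ be finite groups with gcd(|G₁|, |G₂|) = 1. Then G₁ × G₂ is CCA if and only if both G₁ and G₂ are CCA; likewise G₁ × G₂ is strongly CCA if and only if both G₁ and G₂ are strongly CCA. -/
open Function

section Colours

variable {G H : Type*} [Group G] [Group H]

def SendsColour (φ : G → G) (s t : G) : Prop :=
  ∀ x, φ (x * s) = φ x * t ∨ φ (x * s) = φ x * t⁻¹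

lemma colourPreserving_iff {S : Set G} {φ : G → G} :
    ColourPreserving S φ ↔ ∀ s ∈ S, SendsColour φ s s :=
  ⟨fun h s hs x => h x s hs, fun h x s hs => h s hs x⟩

namespace SendsColour

variable {φ : G → G} {s t : G}

lemma inv_left (h : SendsColour φ s t) : SendsColour φ s⁻¹ t := by
  intro x
  rcases h (x * s⁻¹) with h | h <;> rw [inv_mul_cancel_right] at h
  · exact Or.inr (eq_mul_inv_of_mul_eq h.symm)
  · exact Or.inl (by rw [h, inv_mul_cancel_right])

/-- Along a path `x, x s, x s², …` the orientation of the image edges cannot switch, since a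
switch would make `φ` identify `y` and `y s²`; when `s² = 1` the orientation is irrelevant. -/
lemma pow (hφ : Injective φ) (h : SendsColour φ s t) (hst : s * s = 1 → t * t = 1) (n : ℕ) :
    SendsColour φ (s ^ n) (t ^ n) := by
  set ε : G → G := fun y => (φ y)⁻¹ * φ (y * s)
  have hstep : ∀ y, φ (y * s) = φ y * ε y := fun y => by simp [ε]
  have hε : ∀ y, ε y = t ∨ ε y = t⁻¹ := fun y => by
    rcases h y with h | h <;> simp [ε, h]
  have hback : ∀ y, ε (y * s) = (ε y)⁻¹ → ε (y * s) = ε y := by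
    intro y hinv
    have hss : s * s = 1 := by
      have : φ (y * s * s) = φ y := by rw [hstep, hstep, mul_assoc, hinv, mul_inv_cancel, mul_one]
      simpa [mul_assoc] using hφ this
    have ht : t⁻¹ = t := inv_eq_of_mul_eq_one_right (hst hss)
    rcases hε y with h1 | h1 <;> rcases hε (y * s) with h2 | h2 <;> simp only [h1, h2, ht]
  have hconst : ∀ y, ε (y * s) = ε y := by
    intro y
    rcases hε y with h1 | h1 <;> rcases hε (y * s) with h2 | h2
    · rw [h1, h2]
    · exact hback y (by rw [h1, h2])
    · exact hback y (by rw [h1, h2, inv_inv])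
    · rw [h1, h2]
  intro x
  have hpow : ∀ n : ℕ, φ (x * s ^ n) = φ x * ε x ^ n := by
    have hconst' : ∀ n : ℕ, ε (x * s ^ n) = ε x := by
      intro n
      induction n with
      | zero => simp
      | succ n ih => rw [pow_succ, ← mul_assoc, hconst, ih]
    intro n
    induction n with
    | zero => simp
    | succ n ih => rw [pow_succ, ← mul_assoc, hstep, ih, hconst', mul_assoc, ← pow_succ]
  rcases hε x with hx | hx
  · exact Or.inl (by rw [hpow, hx])
  · exact Or.inr (by rw [hpow, hx, inv_pow])

lemma pow_eq_one_iff (hφ : Injective φ) (h : SendsColour φ s t) (hst : s * s = 1 → t * t = 1)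
    (n : ℕ) : s ^ n = 1 ↔ t ^ n = 1 := by
  have h1 := h.pow hφ hst n 1
  simp only [one_mul] at h1
  constructor
  · intro hs
    rw [hs] at h1
    rcases h1 with h1 | h1
    · exact left_eq_mul.mp h1
    · exact inv_eq_one.mp (left_eq_mul.mp h1)
  · intro ht
    rw [ht, inv_one, mul_one, or_self] at h1
    exact hφ h1

end SendsColour

lemma ColourPermuting.exists_sendsColour {S : Set G} {φ : G → G} (h : ColourPermuting S φ) :
    ∀ s ∈ S, ∃ t ∈ S, (s * s = 1 → t * t = 1) ∧ SendsColour φ s t := by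
  obtain ⟨π, hπ, hπinv, hcol⟩ := h
  refine fun s hs => ⟨π s, hπ.mapsTo hs, fun hss => ?_, fun x => hcol x s hs⟩
  have := hπinv s hs
  rw [inv_eq_of_mul_eq_one_right hss] at this
  rw [← inv_eq_iff_mul_eq_one, ← this]

lemma colourPermuting_of_sendsColour [Finite G] {S : Set G} (hS : S⁻¹ = S) (φ : Equiv.Perm G)
    (h : ∀ s ∈ S, ∃ t ∈ S, (s * s = 1 → t * t = 1) ∧ SendsColour φ s t) :
    ColourPermuting S φ := by
  set π : G → G := fun s => (φ 1)⁻¹ * φ s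
  have hπinj : Injective π := (mul_right_injective _).comp φ.injective
  have hπ : ∀ s ∈ S, ∃ t ∈ S, (s * s = 1 → t * t = 1) ∧ SendsColour φ s t ∧
      (π s = t ∨ π s = t⁻¹) ∧ (π s⁻¹ = t ∨ π s⁻¹ = t⁻¹) := by
    intro s hs
    obtain ⟨t, ht, hst, hcol⟩ := h s hs
    refine ⟨t, ht, hst, hcol, ?_, ?_⟩
    · rcases hcol 1 with h1 | h1 <;> rw [one_mul] at h1 <;> simp [π, h1]
    · rcases hcol.inv_left 1 with h1 | h1 <;> rw [one_mul] at h1 <;> simp [π, h1]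
  have hmaps : Set.MapsTo π S S := by
    intro s hs
    obtain ⟨t, ht, -, -, h1 | h1, -⟩ := hπ s hs
    · rwa [h1]
    · rw [h1, ← Set.mem_inv, hS]; exact ht
  refine ⟨π, (Set.toFinite S).injOn_iff_bijOn_of_mapsTo hmaps |>.mp hπinj.injOn,
    fun s hs => ?_, fun x s hs => ?_⟩
  · obtain ⟨t, -, hst, -, h1, h2⟩ := hπ s hs
    by_cases hself : s⁻¹ = s
    · have ht : t⁻¹ = t :=
        inv_eq_of_mul_eq_one_right (hst (by simpa [hself] using inv_mul_cancel s))
      rw [ht, or_self] at h1 h2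
      rw [h2, h1, ht]
    · have hne : π s⁻¹ ≠ π s := hπinj.ne hself
      rcases h1 with h1 | h1 <;> rcases h2 with h2 | h2 <;> simp_all
  · obtain ⟨t, -, -, hcol, h1 | h1, -⟩ := hπ s hs
    · rw [h1]; exact hcol x
    · rw [h1, inv_inv]; exact (hcol x).symm

end Colours

section Transport

variable {G H : Type*} [Group G] [Group H]

lemma closure_image_eq_top {F : Type*} [FunLike F G H] [MonoidHomClass F G H] (f : F)
    (hf : Surjective f) {S : Set G} (hS : Subgroup.closure S = ⊤) :
    Subgroup.closure (f '' S) = ⊤ := by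
  rw [← MonoidHom.coe_coe, ← MonoidHom.map_closure, hS]
  exact Subgroup.map_top_of_surjective _ hf

lemma SendsColour.permCongr (e : G ≃* H) {φ : Equiv.Perm G} {s t : G} (h : SendsColour φ s t) :
    SendsColour (e.toEquiv.permCongr φ) (e s) (e t) := by
  intro x
  rcases h (e.symm x) with h | h <;> simp [h]

lemma ColourPreserving.permCongr (e : G ≃* H) {S : Set G} {φ : Equiv.Perm G}
    (h : ColourPreserving S φ) :
    ColourPreserving (e '' S) (e.toEquiv.permCongr φ) := by
  rw [colourPreserving_iff] at h ⊢
  rintro _ ⟨s, hs, rfl⟩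
  exact (h s hs).permCongr e

lemma ColourPermuting.permCongr (e : G ≃* H) {S : Set G} {φ : Equiv.Perm G}
    (h : ColourPermuting S φ) :
    ColourPermuting (e '' S) (e.toEquiv.permCongr φ) := by
  obtain ⟨π, hπ, hπinv, hcol⟩ := h
  have he : Set.BijOn e S (e '' S) := e.injective.injOn.bijOn_image
  refine ⟨e ∘ π ∘ e.symm, he.comp (hπ.comp ?_), ?_, ?_⟩
  · convert e.symm.injective.injOn.bijOn_image (s := e '' S)
    exact (e.toEquiv.symm_image_image S).symm
  · rintro _ ⟨s, hs, rfl⟩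
    simp [← map_inv, hπinv s hs]
  · rintro x _ ⟨s, hs, rfl⟩
    simpa using (show SendsColour φ s (π s) from fun x => hcol x s hs).permCongr e x

lemma IsAffineMap.permCongr (e : G ≃* H) {φ : Equiv.Perm G} (h : IsAffineMap φ) :
    IsAffineMap (e.toEquiv.permCongr φ) := by
  obtain ⟨α, g, hα⟩ := h
  exact ⟨(e.symm.trans α).trans e, e g, fun x => by simp [hα]⟩

lemma permCongr_permCongr_symm (e : G ≃* H) (φ : Equiv.Perm H) :
    e.toEquiv.permCongr (e.symm.toEquiv.permCongr φ) = φ := by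
  ext; simp

lemma IsCCA.of_mulEquiv (e : G ≃* H) (h : IsCCA G) : IsCCA H := by
  intro S hS hgen φ hφ
  rw [← permCongr_permCongr_symm e φ]
  refine IsAffineMap.permCongr e (h _ ?_ (closure_image_eq_top e.symm e.symm.surjective hgen) _
    (hφ.permCongr e.symm))
  rw [← Set.image_inv, hS]

lemma IsStronglyCCA.of_mulEquiv (e : G ≃* H) (h : IsStronglyCCA G) : IsStronglyCCA H := by
  intro S hS hgen φ hφ
  rw [← permCongr_permCongr_symm e φ]
  refine IsAffineMap.permCongr e (h _ ?_ (closure_image_eq_top e.symm e.symm.surjective hgen) _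
    (hφ.permCongr e.symm))
  rw [← Set.image_inv, hS]

end Transport

section Coprime

variable {G₁ G₂ : Type*} [Group G₁] [Group G₂]

lemma Prod.snd_eq_one_of_pow_card_eq_one (hco : Nat.Coprime (Nat.card G₁) (Nat.card G₂))
    {z : G₁ × G₂} (hz : z ^ Nat.card G₁ = 1) : z.2 = 1 :=
  (pow_eq_one_iff_of_coprime hco).mp ⟨by simpa using congrArg Prod.snd hz, pow_card_eq_one'⟩

lemma Prod.fst_eq_one_of_pow_card_eq_one (hco : Nat.Coprime (Nat.card G₁) (Nat.card G₂))
    {z : G₁ × G₂} (hz : z ^ Nat.card G₂ = 1) : z.1 = 1 :=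
  (pow_eq_one_iff_of_coprime hco).mp ⟨pow_card_eq_one', by simpa using congrArg Prod.fst hz⟩

lemma Prod.exists_pow_eq_mk_pow (hco : Nat.Coprime (Nat.card G₁) (Nat.card G₂))
    (z : G₁ × G₂) (a b : ℕ) : ∃ k : ℕ, z ^ k = (z.1 ^ a, z.2 ^ b) := by
  have hord : Nat.Coprime (orderOf z.1) (orderOf z.2) :=
    hco.of_dvd (orderOf_dvd_natCard _) (orderOf_dvd_natCard _)
  obtain ⟨k, hka, hkb⟩ := Nat.chineseRemainder hord a b
  exact ⟨k, Prod.ext (by simpa using pow_eq_pow_iff_modEq.mpr hka)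
    (by simpa using pow_eq_pow_iff_modEq.mpr hkb)⟩

/-- With coprime orders, `G₁ × 1` is characteristic, so an automorphism of `G₁ × G₂`
restricts to one of `G₁`. -/
lemma exists_mulEquiv_fst_apply [Finite G₁] (hco : Nat.Coprime (Nat.card G₁) (Nat.card G₂))
    (α : (G₁ × G₂) ≃* (G₁ × G₂)) : ∃ α₁ : G₁ ≃* G₁, ∀ z, (α z).1 = α₁ z.1 := by
  have hsnd : ∀ x : G₁, (α (x, 1)).2 = 1 := fun x =>
    Prod.snd_eq_one_of_pow_card_eq_one hco (by simp [← map_pow, pow_card_eq_one'])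
  have hfst : ∀ y : G₂, (α (1, y)).1 = 1 := fun y =>
    Prod.fst_eq_one_of_pow_card_eq_one hco (by simp [← map_pow, pow_card_eq_one'])
  set f : G₁ →* G₁ := (MonoidHom.fst G₁ G₂).comp (α.toMonoidHom.comp (MonoidHom.inl G₁ G₂))
  have hf : Injective f := by
    refine (injective_iff_map_eq_one f).mpr fun x hx => ?_
    have : α (x, 1) = 1 := Prod.ext hx (hsnd x)
    simpa using this
  refine ⟨MulEquiv.ofBijective f (Finite.injective_iff_bijective.mp hf), fun z => ?_⟩
  rw [show α z = α (z.1, 1) * α (1, z.2) by rw [← map_mul]; simp, Prod.fst_mul, hfst, mul_one]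
  rfl

lemma IsAffineMap.of_fst_eq [Finite G₁] (hco : Nat.Coprime (Nat.card G₁) (Nat.card G₂))
    {φ : G₁ × G₂ → G₁ × G₂} (hφ : IsAffineMap φ) {f : G₁ → G₁} (hf : ∀ x, (φ (x, 1)).1 = f x) :
    IsAffineMap f := by
  obtain ⟨α, g, hα⟩ := hφ
  obtain ⟨α₁, hα₁⟩ := exists_mulEquiv_fst_apply hco α
  exact ⟨α₁, g.1, fun x => by rw [← hf, hα, hα₁]; rfl⟩

lemma isAffineMap_of_fst_of_snd {φ : G₁ × G₂ → G₁ × G₂} {α₁ : G₁ ≃* G₁} {α₂ : G₂ ≃* G₂}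
    {g₁ : G₁} {g₂ : G₂} (h₁ : ∀ z, (φ z).1 = α₁ (g₁ * z.1)) (h₂ : ∀ z, (φ z).2 = α₂ (g₂ * z.2)) :
    IsAffineMap φ :=
  ⟨α₁.prodCongr α₂, (g₁, g₂), fun z => Prod.ext (h₁ z) (h₂ z)⟩

end Coprime

section Forward

variable {G₁ G₂ : Type*} [Group G₁] [Group G₂]

def prodConnectionSet (S₁ : Set G₁) : Set (G₁ × G₂) :=
  MonoidHom.inl G₁ G₂ '' S₁ ∪ Set.range (MonoidHom.inr G₁ G₂)

lemma prodConnectionSet_inv {S₁ : Set G₁} (hS₁ : S₁⁻¹ = S₁) :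
    (prodConnectionSet S₁ : Set (G₁ × G₂))⁻¹ = prodConnectionSet S₁ := by
  rw [prodConnectionSet, Set.union_inv, ← Set.image_inv, hS₁, ← Set.image_univ, ← Set.image_inv,
    Set.inv_univ]

lemma closure_prodConnectionSet {S₁ : Set G₁} (hS₁ : Subgroup.closure S₁ = ⊤) :
    Subgroup.closure (prodConnectionSet S₁ : Set (G₁ × G₂)) = ⊤ := by
  refine eq_top_iff.mpr fun z _ => ?_
  have hz : z = (z.1, 1) * (1, z.2) := by simp
  rw [hz]
  refine Subgroup.mul_mem _ ?_ (Subgroup.subset_closure (Or.inr ⟨z.2, rfl⟩))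
  refine Subgroup.closure_mono Set.subset_union_left ?_
  rw [← MonoidHom.map_closure, hS₁]
  exact ⟨z.1, Subgroup.mem_top _, rfl⟩

lemma SendsColour.prodCongr_inl {φ₁ : Equiv.Perm G₁} {a b : G₁} (h : SendsColour φ₁ a b) :
    SendsColour (φ₁.prodCongr (Equiv.refl G₂)) (a, 1) (b, 1) := by
  rintro ⟨x₁, x₂⟩
  rcases h x₁ with h | h <;> simp [h]

lemma sendsColour_prodCongr_inr (φ₁ : Equiv.Perm G₁) (c : G₂) :
    SendsColour (φ₁.prodCongr (Equiv.refl G₂)) (1, c) (1, c) :=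
  fun _ => Or.inl (by simp [Prod.map])

lemma IsCCA.of_prod_left [Finite G₁] (hco : Nat.Coprime (Nat.card G₁) (Nat.card G₂))
    (h : IsCCA (G₁ × G₂)) : IsCCA G₁ := by
  intro S₁ hS₁ hgen φ₁ hφ₁
  refine (h _ (prodConnectionSet_inv hS₁) (closure_prodConnectionSet hgen)
    (φ₁.prodCongr (Equiv.refl G₂)) ?_).of_fst_eq hco fun _ => rfl
  rw [colourPreserving_iff] at hφ₁ ⊢
  rintro _ (⟨a, ha, rfl⟩ | ⟨c, rfl⟩)
  · exact (hφ₁ a ha).prodCongr_inl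
  · exact sendsColour_prodCongr_inr φ₁ c

lemma IsStronglyCCA.of_prod_left [Finite G₁] [Finite G₂]
    (hco : Nat.Coprime (Nat.card G₁) (Nat.card G₂)) (h : IsStronglyCCA (G₁ × G₂)) :
    IsStronglyCCA G₁ := by
  intro S₁ hS₁ hgen φ₁ hφ₁
  refine (h _ (prodConnectionSet_inv hS₁) (closure_prodConnectionSet hgen)
    (φ₁.prodCongr (Equiv.refl G₂)) ?_).of_fst_eq hco fun _ => rfl
  refine colourPermuting_of_sendsColour (prodConnectionSet_inv hS₁) _ ?_
  rintro _ (⟨a, ha, rfl⟩ | ⟨c, rfl⟩)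
  · obtain ⟨b, hb, hab, hcol⟩ := hφ₁.exists_sendsColour a ha
    refine ⟨(b, 1), Or.inl ⟨b, hb, rfl⟩, fun haa => ?_, hcol.prodCongr_inl⟩
    simpa using hab (by simpa using haa)
  · exact ⟨(1, c), Or.inr ⟨c, rfl⟩, id, sendsColour_prodCongr_inr φ₁ c⟩

end Forward

section Backward

def rightPeriods {G α : Type*} [Group G] (f : G → α) : Subgroup G where
  carrier := {g | ∀ x, f (x * g) = f x}
  one_mem' := by simp
  mul_mem' := fun ha hb x => by rw [← mul_assoc, hb, ha]
  inv_mem' := fun {g} ha x => by rw [← ha (x * g⁻¹), inv_mul_cancel_right]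

lemma mem_rightPeriods {G α : Type*} [Group G] {f : G → α} {g : G} :
    g ∈ rightPeriods f ↔ ∀ x, f (x * g) = f x :=
  Iff.rfl

variable {G₁ G₂ : Type*} [Group G₁] [Group G₂]

lemma exists_perm_fst_eq [Finite G₁] (hco : Nat.Coprime (Nat.card G₁) (Nat.card G₂))
    {S : Set (G₁ × G₂)} (hgen : Subgroup.closure S = ⊤) (φ : Equiv.Perm (G₁ × G₂))
    (hφ : ∀ s ∈ S, ∃ t, (s * s = 1 → t * t = 1) ∧ SendsColour φ s t) :
    ∃ f : Equiv.Perm G₁, ∀ z, (φ z).1 = f z.1 := by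
  have hper : ∀ c : G₂, ((1 : G₁), c) ∈ rightPeriods fun z => (φ z).1 := by
    suffices Subgroup.closure (MonoidHom.snd G₁ G₂ '' S) ≤
        (rightPeriods fun z => (φ z).1).comap (MonoidHom.inr G₁ G₂) by
      rw [closure_image_eq_top _ Prod.snd_surjective hgen] at this
      exact fun c => this (Subgroup.mem_top c)
    rw [Subgroup.closure_le]
    rintro _ ⟨s, hs, rfl⟩
    obtain ⟨t, hst, hcol⟩ := hφ s hs
    obtain ⟨k, hk⟩ := Prod.exists_pow_eq_mk_pow hco s 0 1
    rw [pow_zero, pow_one] at hk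
    have ht : (t ^ k).1 = 1 := Prod.fst_eq_one_of_pow_card_eq_one hco <| by
      rw [← pow_mul, ← hcol.pow_eq_one_iff φ.injective hst, pow_mul, hk]
      simp [pow_card_eq_one']
    have hcolk := hcol.pow φ.injective hst k
    rw [hk] at hcolk
    intro x
    rcases hcolk x with h | h <;> simp [h, ht]
  have hfac : ∀ z, (φ z).1 = (φ (z.1, 1)).1 := fun z => by
    simpa using mem_rightPeriods.mp (hper z.2) (z.1, 1)
  have hsurj : Surjective fun a => (φ (a, 1)).1 := fun a =>
    ⟨(φ.symm (a, 1)).1, by simp [← hfac]⟩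
  exact ⟨Equiv.ofBijective _ (Finite.surjective_iff_bijective.mp hsurj), hfac⟩

lemma SendsColour.fst {φ : G₁ × G₂ → G₁ × G₂} {f : G₁ → G₁} (hf : ∀ z, (φ z).1 = f z.1)
    {a : G₁} {t : G₁ × G₂} (h : SendsColour φ (a, 1) t) : SendsColour f a t.1 := by
  intro x
  rcases h (x, 1) with h | h
  · exact Or.inl (by simpa [hf] using congrArg Prod.fst h)
  · exact Or.inr (by simpa [hf] using congrArg Prod.fst h)

/-- The connection set of the Cayley graph that `Cay(G₁ × G₂; S)` induces on the first factor. -/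
def fstColours (S : Set (G₁ × G₂)) : Set G₁ :=
  {a | ∃ s ∈ S, ∃ k : ℕ, s ^ k = (a, 1)}

lemma fstColours_inv {S : Set (G₁ × G₂)} (hS : S⁻¹ = S) : (fstColours S)⁻¹ = fstColours S := by
  have key : ∀ a ∈ fstColours S, a⁻¹ ∈ fstColours S := by
    rintro a ⟨s, hs, k, hk⟩
    exact ⟨s⁻¹, by rwa [← Set.mem_inv, hS], k, by simp [inv_pow, hk]⟩
  exact Set.Subset.antisymm (fun a ha => by simpa using key _ ha) key

lemma closure_fstColours (hco : Nat.Coprime (Nat.card G₁) (Nat.card G₂)) {S : Set (G₁ × G₂)}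
    (hgen : Subgroup.closure S = ⊤) : Subgroup.closure (fstColours S) = ⊤ := by
  refine eq_top_mono (Subgroup.closure_mono ?_)
    (closure_image_eq_top (MonoidHom.fst G₁ G₂) Prod.fst_surjective hgen)
  rintro _ ⟨s, hs, rfl⟩
  obtain ⟨k, hk⟩ := Prod.exists_pow_eq_mk_pow hco s 1 0
  exact ⟨s, hs, k, by simpa using hk⟩

lemma IsCCA.exists_fst_eq [Finite G₁] (hco : Nat.Coprime (Nat.card G₁) (Nat.card G₂))
    (h₁ : IsCCA G₁) {S : Set (G₁ × G₂)} (hS : S⁻¹ = S) (hgen : Subgroup.closure S = ⊤)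
    {φ : Equiv.Perm (G₁ × G₂)} (hφ : ColourPreserving S φ) :
    ∃ (α : G₁ ≃* G₁) (g : G₁), ∀ z, (φ z).1 = α (g * z.1) := by
  rw [colourPreserving_iff] at hφ
  obtain ⟨f, hf⟩ := exists_perm_fst_eq hco hgen φ fun s hs => ⟨s, id, hφ s hs⟩
  obtain ⟨α, g, hα⟩ := h₁ _ (fstColours_inv hS) (closure_fstColours hco hgen) f <| by
    rw [colourPreserving_iff]
    rintro a ⟨s, hs, k, hk⟩
    have hcolk := (hφ s hs).pow φ.injective id k
    rw [hk] at hcolk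
    exact hcolk.fst hf
  exact ⟨α, g, fun z => by rw [hf, hα]⟩

lemma IsStronglyCCA.exists_fst_eq [Finite G₁] (hco : Nat.Coprime (Nat.card G₁) (Nat.card G₂))
    (h₁ : IsStronglyCCA G₁) {S : Set (G₁ × G₂)} (hS : S⁻¹ = S) (hgen : Subgroup.closure S = ⊤)
    {φ : Equiv.Perm (G₁ × G₂)} (hφ : ColourPermuting S φ) :
    ∃ (α : G₁ ≃* G₁) (g : G₁), ∀ z, (φ z).1 = α (g * z.1) := by
  have hW := hφ.exists_sendsColour
  obtain ⟨f, hf⟩ := exists_perm_fst_eq hco hgen φ fun s hs =>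
    let ⟨t, _, ht⟩ := hW s hs; ⟨t, ht⟩
  have hcp : ColourPermuting (fstColours S) f := by
    refine colourPermuting_of_sendsColour (fstColours_inv hS) f ?_
    rintro a ⟨s, hs, k, hk⟩
    obtain ⟨t, ht, hst, hcol⟩ := hW s hs
    have hord : ∀ n, (a, (1 : G₂)) ^ n = 1 ↔ (t ^ k) ^ n = 1 := fun n => by
      rw [← hk, ← pow_mul, ← pow_mul, hcol.pow_eq_one_iff φ.injective hst]
    have ht₂ : (t ^ k).2 = 1 := Prod.snd_eq_one_of_pow_card_eq_one hco <| by
      rw [← hord]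
      simp [pow_card_eq_one']
    have hcolk := hcol.pow φ.injective hst k
    rw [hk] at hcolk
    refine ⟨(t ^ k).1, ⟨t, ht, k, Prod.ext rfl ht₂⟩, fun haa => ?_, hcolk.fst hf⟩
    have := (hord 2).mp (by simp [sq, haa])
    simpa [sq, Prod.ext_iff, ht₂] using this
  obtain ⟨α, g, hα⟩ := h₁ _ (fstColours_inv hS) (closure_fstColours hco hgen) f hcp
  exact ⟨α, g, fun z => by rw [hf, hα]⟩

theorem isCCA_prod_iff [Finite G₁] [Finite G₂] (hco : Nat.Coprime (Nat.card G₁) (Nat.card G₂)) :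
    IsCCA (G₁ × G₂) ↔ IsCCA G₁ ∧ IsCCA G₂ := by
  refine ⟨fun h => ⟨h.of_prod_left hco, (h.of_mulEquiv MulEquiv.prodComm).of_prod_left hco.symm⟩,
    ?_⟩
  rintro ⟨h₁, h₂⟩ S hS hgen φ hφ
  obtain ⟨α₁, g₁, hfst⟩ := h₁.exists_fst_eq hco hS hgen hφ
  obtain ⟨α₂, g₂, hsnd⟩ := h₂.exists_fst_eq hco.symm (by rw [← Set.image_inv, hS])
    (closure_image_eq_top _ MulEquiv.prodComm.surjective hgen) (hφ.permCongr MulEquiv.prodComm)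
  exact isAffineMap_of_fst_of_snd hfst fun z => by simpa using hsnd z.swap

theorem isStronglyCCA_prod_iff [Finite G₁] [Finite G₂]
    (hco : Nat.Coprime (Nat.card G₁) (Nat.card G₂)) :
    IsStronglyCCA (G₁ × G₂) ↔ IsStronglyCCA G₁ ∧ IsStronglyCCA G₂ := by
  refine ⟨fun h => ⟨h.of_prod_left hco, (h.of_mulEquiv MulEquiv.prodComm).of_prod_left hco.symm⟩,
    ?_⟩
  rintro ⟨h₁, h₂⟩ S hS hgen φ hφ
  obtain ⟨α₁, g₁, hfst⟩ := h₁.exists_fst_eq hco hS hgen hφ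
  obtain ⟨α₂, g₂, hsnd⟩ := h₂.exists_fst_eq hco.symm (by rw [← Set.image_inv, hS])
    (closure_image_eq_top _ MulEquiv.prodComm.surjective hgen) (hφ.permCongr MulEquiv.prodComm)
  exact isAffineMap_of_fst_of_snd hfst fun z => by simpa using hsnd z.swap

end Backward

/-- For groups of coprime orders, `G₁ × G₂` is (strongly) CCA iff both factors are. -/
theorem stmt_11 {G₁ G₂ : Type*} [Group G₁] [Group G₂] [Finite G₁] [Finite G₂]
    (hco : Nat.Coprime (Nat.card G₁) (Nat.card G₂)) :
    (IsCCA (G₁ × G₂) ↔ IsCCA G₁ ∧ IsCCA G₂) ∧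
    (IsStronglyCCA (G₁ × G₂) ↔ IsStronglyCCA G₁ ∧ IsStronglyCCA G₂) :=
  ⟨isCCA_prod_iff hco, isStronglyCCA_prod_iff hco⟩
end

section
/- For every k ≥ 2, the abelian group ℤ_{2^k} × ℤ₂ × ℤ₂ is not CCA. -/
/-!
Let `ψ : G →* H` be a homomorphism of an abelian group and `z ∈ ker ψ` an involution. The twist `τ`
multiplying by `z` exactly on one fibre `ψ⁻¹(c)` is an involutive permutation of `G`; it commutes
with right multiplication by elements of `ker ψ`, and it sends an edge `g — gs` with `s² = z` to an
edge `τ g — τ g · s` or `τ g — τ g · sz = τ g · s⁻¹`. So it preserves colours of any Cayley graph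
whose generators lie in `ker ψ` or square to `z`.

For `ℤ_{4q} × ℤ₂ × ℤ₂` take `ψ` the quotient by the cyclic subgroup `⟨(1,1,1)⟩`, which is `ℤ₂²`,
`z = (2q,0,0)` and the generators `(1,1,1)`, `(q,1,0)`, `(q,0,1)`. Twisting on `ψ⁻¹(1,1)` fixes
`0`, `(0,1,0)` and `(0,0,1)` but moves their sum, so the twist is not affine.
-/

section Twist

variable {G H : Type*} [CommGroup G] [MulOneClass H] [DecidableEq H]

def twist (ψ : G →* H) (c : H) (z g : G) : G := if ψ g = c then g * z else g

variable (ψ : G →* H) (c : H) {z : G}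

theorem twist_involutive (hz : z * z = 1) (hψz : ψ z = 1) :
    Function.Involutive (twist ψ c z) := by
  intro g
  by_cases hg : ψ g = c
  · have h₁ : twist ψ c z g = g * z := if_pos hg
    have h₂ : twist ψ c z (g * z) = g * z * z := if_pos (by rw [map_mul, hψz, mul_one, hg])
    rw [h₁, h₂, mul_assoc, hz, mul_one]
  · have h₁ : twist ψ c z g = g := if_neg hg
    rw [h₁, h₁]

theorem twist_mul_of_map_eq_one {s : G} (hs : ψ s = 1) (g : G) :
    twist ψ c z (g * s) = twist ψ c z g * s := by
  have hgs : ψ (g * s) = ψ g := by rw [map_mul, hs, mul_one]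
  unfold twist
  rw [hgs]
  split_ifs
  · exact mul_right_comm _ _ _
  · rfl

theorem twist_mul_of_mul_self {s : G} (hs : s * s = z) (hz : z * z = 1) (g : G) :
    twist ψ c z (g * s) = twist ψ c z g * s ∨ twist ψ c z (g * s) = twist ψ c z g * s⁻¹ := by
  have hinv : s⁻¹ = s * z := inv_eq_of_mul_eq_one_right (by rw [← mul_assoc, hs, hz])
  unfold twist
  split_ifs
  · left; exact mul_right_comm _ _ _
  · right; rw [hinv, mul_assoc]
  · right; rw [hinv, mul_mul_mul_comm, hz, mul_one]
  · left; rfl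

theorem twist_one (hc : c ≠ 1) : twist ψ c z 1 = 1 :=
  if_neg (by rw [map_one]; exact hc.symm)

theorem twist_mul_ne (hz : z ≠ 1) {x y : G} (hx : ψ x ≠ c) (hy : ψ y ≠ c)
    (hxy : ψ (x * y) = c) : twist ψ c z (x * y) ≠ twist ψ c z x * twist ψ c z y := by
  rw [twist, twist, twist, if_pos hxy, if_neg hx, if_neg hy]
  simpa using hz

end Twist

theorem IsAffineMap.map_mul_of_map_one {G : Type*} [Group G] {φ : G → G} (hφ : IsAffineMap φ)
    (h1 : φ 1 = 1) (x y : G) : φ (x * y) = φ x * φ y := by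
  obtain ⟨α, g, hα⟩ := hφ
  have hg : g = 1 := α.injective (by rw [← mul_one g, ← hα, h1, map_one])
  simp only [hα, hg, one_mul]
  exact map_mul α x y

theorem not_isCCA_of_twist {G H : Type*} [CommGroup G] [Group H] [DecidableEq H] (ψ : G →* H)
    {c : H} {z : G} {T : Set G} (hT : Subgroup.closure T = ⊤)
    (hTψ : ∀ s ∈ T, ψ s = 1 ∨ s * s = z) (hz : z * z = 1) (hψz : ψ z = 1) (hz₁ : z ≠ 1)
    (hc : c ≠ 1) {x y : G} (hx : ψ x ≠ c) (hy : ψ y ≠ c) (hxy : ψ (x * y) = c) :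
    ¬ IsCCA G := by
  intro hCCA
  have hS : (T ∪ T⁻¹)⁻¹ = T ∪ T⁻¹ := by rw [Set.union_inv, inv_inv, Set.union_comm]
  have hgen : Subgroup.closure (T ∪ T⁻¹) = ⊤ :=
    top_le_iff.1 (hT ▸ Subgroup.closure_mono Set.subset_union_left)
  have hSψ : ∀ s ∈ T ∪ T⁻¹, ψ s = 1 ∨ s * s = z := by
    rintro s (hs | hs)
    · exact hTψ s hs
    · refine (hTψ _ hs).imp (fun h => ?_) (fun h => ?_)
      · rwa [map_inv, inv_eq_one] at h
      · rw [← inv_inv s, ← mul_inv, h, inv_eq_of_mul_eq_one_right hz]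
  have hcol : ColourPreserving (T ∪ T⁻¹) ((twist_involutive ψ c hz hψz).toPerm _) := by
    intro g s hs
    rw [Function.Involutive.coe_toPerm]
    rcases hSψ s hs with h | h
    · exact Or.inl (twist_mul_of_map_eq_one ψ c h g)
    · exact twist_mul_of_mul_self ψ c h hz g
  have hmul := (hCCA _ hS hgen _ hcol).map_mul_of_map_one
  simp only [Function.Involutive.coe_toPerm] at hmul
  exact twist_mul_ne ψ c hz₁ hx hy hxy (hmul (twist_one ψ c hc) x y)

section CyclicTimesKlein

open Multiplicative

variable (q : ℕ)

local notation "A" => ZMod (4 * q) × ZMod 2 × ZMod 2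

def diagGens : Set (Multiplicative A) :=
  {ofAdd ((1, 1, 1) : A), ofAdd ((q, 1, 0) : A), ofAdd ((q, 0, 1) : A)}

theorem closure_diagGens [NeZero q] : Subgroup.closure (diagGens q) = ⊤ := by
  set K := Subgroup.closure (diagGens q)
  have ht : ofAdd ((1, 1, 1) : A) ∈ K := Subgroup.subset_closure (by simp [diagGens])
  have hs₀ : ofAdd ((q, 1, 0) : A) ∈ K := Subgroup.subset_closure (by simp [diagGens])
  have hs₁ : ofAdd ((q, 0, 1) : A) ∈ K := Subgroup.subset_closure (by simp [diagGens])
  have ha : ofAdd ((1, 0, 0) : A) ∈ K := by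
    convert div_mem (mul_mem ht hs₁) hs₀ using 1
    apply toAdd.injective
    ext <;> simp [CharTwo.add_self_eq_zero]
  have hb : ofAdd ((0, 1, 0) : A) ∈ K := by
    convert div_mem hs₀ (pow_mem ha q) using 1
    apply toAdd.injective
    ext <;> simp
  have hc : ofAdd ((0, 0, 1) : A) ∈ K := by
    convert div_mem hs₁ (pow_mem ha q) using 1
    apply toAdd.injective
    ext <;> simp
  refine eq_top_iff.2 fun g _ => ?_
  convert mul_mem (mul_mem (pow_mem ha g.toAdd.1.val) (pow_mem hb g.toAdd.2.1.val))
    (pow_mem hc g.toAdd.2.2.val) using 1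
  apply toAdd.injective
  ext <;> simp

def castModTwo : ZMod (4 * q) →+* ZMod 2 :=
  ZMod.castHom (Dvd.intro (2 * q) (by ring)) (ZMod 2)

def projModDiag : A →+ ZMod 2 × ZMod 2 :=
  AddMonoidHom.mk' (fun g => (g.2.1 + castModTwo q g.1, g.2.2 + castModTwo q g.1)) fun g h => by
    simp only [Prod.fst_add, Prod.snd_add, map_add, Prod.mk_add_mk]
    ext <;> ring

@[simp]
theorem projModDiag_apply (g : A) :
    projModDiag q g = (g.2.1 + castModTwo q g.1, g.2.2 + castModTwo q g.1) :=
  rfl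

theorem not_isCCA_zmod_four_mul_prod [NeZero q] : ¬ IsCCA (Multiplicative A) := by
  set ψ := (projModDiag q).toMultiplicative
  set z : Multiplicative A := ofAdd ((2 * q : ℕ), 0, 0)
  have hz : z * z = 1 := by
    rw [← ofAdd_add, ← ofAdd_zero, Prod.mk_add_mk, ← Nat.cast_add,
      show 2 * q + 2 * q = 4 * q by ring, ZMod.natCast_self]
    rfl
  have hψz : ψ z = 1 := by
    simp [ψ, z, map_ofNat, CharTwo.two_eq_zero]
  have hz₁ : z ≠ 1 := by
    simp only [z, Ne, ofAdd_eq_one, Prod.mk_eq_zero, and_true, ZMod.natCast_eq_zero_iff]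
    have hq := NeZero.pos q
    intro h
    have := Nat.le_of_dvd (by omega) h
    omega
  have hgens : ∀ s ∈ diagGens q, ψ s = 1 ∨ s * s = z := by
    simp only [diagGens, Set.mem_insert_iff, Set.mem_singleton_iff, forall_eq_or_imp, forall_eq]
    refine ⟨Or.inl ?_, Or.inr ?_, Or.inr ?_⟩
    all_goals
      apply toAdd.injective
      ext <;> simp [ψ, z, two_mul, CharTwo.add_self_eq_zero]
  exact not_isCCA_of_twist ψ (c := ofAdd (1, 1)) (closure_diagGens q) hgens hz hψz hz₁ (by decide)
    (x := ofAdd (0, 1, 0)) (y := ofAdd (0, 0, 1)) (by simp [ψ]) (by simp [ψ]) (by simp [ψ])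

end CyclicTimesKlein

/-- For every `k ≥ 2`, the abelian group `ℤ_{2^k} × ℤ₂ × ℤ₂` is not CCA. -/
theorem stmt_13 (k : ℕ) (hk : 2 ≤ k) :
    ¬ IsCCA (Multiplicative (ZMod (2 ^ k) × ZMod 2 × ZMod 2)) := by
  obtain ⟨m, rfl⟩ := Nat.exists_eq_add_of_le' hk
  rw [show 2 ^ (m + 2) = 4 * 2 ^ m by ring]
  exact not_isCCA_zmod_four_mul_prod (2 ^ m)
end

section
/- Let D be the generalized dihedral group over a finite abelian group A. Then D is CCA if and only if A is CCA. In particular, every dihedral group is CCA. -/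
open Function
open scoped Pointwise

section Affine

variable {G : Type*} [Group G] {φ : G → G}

theorem ColourPreserving.mul_left {S : Set G} (h : ColourPreserving S φ) (g : G) :
    ColourPreserving S (fun x => g * φ x) := by
  intro x s hs
  simp only [mul_assoc]
  exact (h x s hs).imp (congrArg (g * ·)) (congrArg (g * ·))

theorem IsAffineMap.mul_left (h : IsAffineMap φ) (g : G) : IsAffineMap (fun x => g * φ x) := by
  obtain ⟨α, a, ha⟩ := h
  exact ⟨α, α.symm g * a, fun x => by simp [ha, mul_assoc]⟩

theorem IsAffineMap.map_mul (h : IsAffineMap φ) (h1 : φ 1 = 1) (x y : G) :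
    φ (x * y) = φ x * φ y := by
  obtain ⟨α, a, ha⟩ := h
  obtain rfl : a = 1 := α.injective (by rw [← mul_one a, ← ha, h1, map_one])
  simp [ha]

theorem isAffineMap_of_map_mul (hφ : Bijective φ) (h : ∀ x y, φ (x * y) = φ x * φ y) :
    IsAffineMap φ :=
  ⟨MulEquiv.ofBijective (MulHom.mk φ h) hφ, 1, fun x => by simp⟩

theorem isCCA_of_forall_map_mul
    (h : ∀ S : Set G, S⁻¹ = S → Subgroup.closure S = ⊤ → ∀ ψ : G → G, Bijective ψ →
      ColourPreserving S ψ → ψ 1 = 1 → ∀ x y, ψ (x * y) = ψ x * ψ y) :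
    IsCCA G := by
  intro S hS hgen φ hφ
  have hbij : Bijective fun x => (φ 1)⁻¹ * φ x := (Group.mulLeft_bijective _).comp φ.bijective
  have hψ : IsAffineMap fun x => (φ 1)⁻¹ * φ x :=
    isAffineMap_of_map_mul hbij (h S hS hgen _ hbij (hφ.mul_left _) (inv_mul_cancel _))
  simpa using hψ.mul_left (φ 1)

end Affine

section Closure

variable {G α : Type*} [Group G] {S : Set G}

theorem apply_mul_eq_of_mem_closure {f : G → α} (h : ∀ x, ∀ s ∈ S, f (x * s) = f x)
    {y : G} (hy : y ∈ Subgroup.closure S) (x : G) : f (x * y) = f x := by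
  induction hy using Subgroup.closure_induction_right with
  | one => rw [mul_one]
  | mul_right y _ s hs ih => rw [← mul_assoc, h _ s hs, ih]
  | mul_inv_cancel y _ s hs ih => rw [← ih, ← h _ s hs, ← mul_assoc, inv_mul_cancel_right]

theorem apply_eq_of_closure_eq_top {f : G → α} (hS : Subgroup.closure S = ⊤)
    (h : ∀ x, ∀ s ∈ S, f (x * s) = f x) (x y : G) : f x = f y := by
  rw [← one_mul x, ← one_mul y, apply_mul_eq_of_mem_closure h (hS ▸ Subgroup.mem_top x),
    apply_mul_eq_of_mem_closure h (hS ▸ Subgroup.mem_top y)]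

theorem map_mul_of_closure_eq_top {ψ : G → G} (hS : Subgroup.closure S = ⊤) (h1 : ψ 1 = 1)
    (h : ∀ x, ∀ s ∈ S, ψ (x * s) = ψ x * ψ s) (x y : G) : ψ (x * y) = ψ x * ψ y := by
  have h_inv : ∀ z, ∀ s ∈ S, ψ (z * s⁻¹) = ψ z * (ψ s)⁻¹ := fun z s hs => by
    rw [eq_mul_inv_iff_mul_eq, ← h _ s hs, inv_mul_cancel_right]
  induction (hS ▸ Subgroup.mem_top y : y ∈ Subgroup.closure S)
    using Subgroup.closure_induction_right with
  | one => rw [mul_one, h1, mul_one]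
  | mul_right y _ s hs ih => rw [← mul_assoc, h _ s hs, ih, h _ s hs, mul_assoc]
  | mul_inv_cancel y _ s hs ih => rw [← mul_assoc, h_inv _ s hs, ih, h_inv _ s hs, mul_assoc]

end Closure

section EdgeLabel

variable {G : Type*} [Group G] {S : Set G} {ψ : G → G} {s : G}

/-- The colour `s` or `s⁻¹` with which `ψ` carries the edge `x — x * s`. -/
def edgeLabel (ψ : G → G) (x s : G) : G := (ψ x)⁻¹ * ψ (x * s)

theorem mul_edgeLabel (ψ : G → G) (x s : G) : ψ x * edgeLabel ψ x s = ψ (x * s) :=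
  mul_inv_cancel_left _ _

theorem edgeLabel_one (h1 : ψ 1 = 1) (s : G) : edgeLabel ψ 1 s = ψ s := by
  simp [edgeLabel, h1]

theorem eq_inv_of_ne_of_mem_pair {a b : G} (ha : a = s ∨ a = s⁻¹) (hb : b = s ∨ b = s⁻¹)
    (hab : a ≠ b) : b = a⁻¹ := by
  rcases ha with rfl | rfl <;> rcases hb with rfl | rfl <;> simp_all

theorem zpowers_eq_of_mem_pair {a : G} (ha : a = s ∨ a = s⁻¹) :
    Subgroup.zpowers a = Subgroup.zpowers s := by
  rcases ha with rfl | rfl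
  exacts [rfl, Subgroup.zpowers_inv]

namespace ColourPreserving

theorem edgeLabel_eq (hψ : ColourPreserving S ψ) (hs : s ∈ S) (x : G) :
    edgeLabel ψ x s = s ∨ edgeLabel ψ x s = s⁻¹ := by
  rcases hψ x s hs with h | h <;> simp [edgeLabel, h]

theorem edgeLabel_eq_self_of_mul_self (hψ : ColourPreserving S ψ) (hs : s ∈ S)
    (hs2 : s * s = 1) (x : G) :
    edgeLabel ψ x s = s := by
  have := hψ.edgeLabel_eq hs x
  rwa [inv_eq_of_mul_eq_one_right hs2, or_self] at this

/-- Unless `s` is an involution, `ψ` cannot reverse the direction of two consecutive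
`s`-edges, since it would then send `x * s * s` back to `ψ x`. -/
theorem edgeLabel_mul_self (hψ : ColourPreserving S ψ) (hinj : Injective ψ) (hs : s ∈ S)
    (hs2 : s * s ≠ 1) (x : G) :
    edgeLabel ψ (x * s) s = edgeLabel ψ x s := by
  by_contra hne
  have hinv := eq_inv_of_ne_of_mem_pair (hψ.edgeLabel_eq hs x) (hψ.edgeLabel_eq hs (x * s))
    (Ne.symm hne)
  apply hs2
  rw [← mul_eq_left (a := x), ← mul_assoc]
  apply hinj
  rw [← mul_edgeLabel ψ, ← mul_edgeLabel ψ, hinv, mul_inv_cancel_right]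

theorem edgeLabel_mul_mem_zpowers (hψ : ColourPreserving S ψ) (hinj : Injective ψ)
    (hs : s ∈ S) (hs2 : s * s ≠ 1) {y : G} (hy : y ∈ Subgroup.zpowers s) (x : G) :
    edgeLabel ψ (x * y) s = edgeLabel ψ x s := by
  rw [Subgroup.zpowers_eq_closure] at hy
  exact apply_mul_eq_of_mem_closure (f := fun x => edgeLabel ψ x s)
    (fun x _ ht => (Set.mem_singleton_iff.mp ht) ▸ hψ.edgeLabel_mul_self hinj hs hs2 x) hy x

end ColourPreserving

end EdgeLabel

section CommGroup

variable {G : Type*} [CommGroup G]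

theorem zpowers_le_or_le_of_sq_eq_sq [Finite G] (hG : {g : G | orderOf g = 2}.Subsingleton)
    {a b : G} (h : a ^ 2 = b ^ 2) :
    Subgroup.zpowers a ≤ Subgroup.zpowers b ∨ Subgroup.zpowers b ≤ Subgroup.zpowers a := by
  simp only [Subgroup.zpowers_le]
  rcases Nat.even_or_odd (orderOf a) with heven | hodd
  · by_cases hab : a * b⁻¹ = 1
    · left
      rw [mul_inv_eq_one.mp hab]
      exact Subgroup.mem_zpowers b
    · right
      have hd : orderOf (a * b⁻¹) = 2 :=
        orderOf_eq_prime (by rw [mul_pow, h, inv_pow, mul_inv_cancel]) hab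
      have hz : orderOf (a ^ (orderOf a / 2)) = 2 :=
        orderOf_pow_orderOf_div (orderOf_pos a).ne' (even_iff_two_dvd.mp heven)
      have hb : b = (a * b⁻¹)⁻¹ * a := by rw [mul_inv_rev, inv_inv, inv_mul_cancel_right]
      rw [hb, hG hd hz]
      exact mul_mem (inv_mem (Subgroup.npow_mem_zpowers a _)) (Subgroup.mem_zpowers a)
  · left
    have ha : a ∈ Subgroup.zpowers (a ^ 2) :=
      mem_zpowers_pow_iff.mpr (Nat.coprime_two_left.mpr hodd)
    rw [h] at ha
    exact Subgroup.zpowers_le.mpr (Subgroup.npow_mem_zpowers b 2) ha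

variable {S : Set G} {ψ : G → G} {s t x : G}

/-- Compares the two paths around the square `x, x * s, x * s * t = x * t * s, x * t`. -/
theorem ColourPreserving.edgeLabel_flip (hψ : ColourPreserving S ψ) (hs : s ∈ S) (ht : t ∈ S)
    (hne : edgeLabel ψ (x * t) s ≠ edgeLabel ψ x s) :
    edgeLabel ψ (x * s) t ≠ edgeLabel ψ x t ∧ edgeLabel ψ x s ^ 2 = edgeLabel ψ x t ^ 2 := by
  have hsquare :
      edgeLabel ψ x s * edgeLabel ψ (x * s) t = edgeLabel ψ x t * edgeLabel ψ (x * t) s := by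
    apply mul_left_cancel (a := ψ x)
    rw [← mul_assoc, ← mul_assoc, mul_edgeLabel ψ, mul_edgeLabel ψ, mul_edgeLabel ψ,
      mul_edgeLabel ψ, mul_right_comm]
  rw [eq_inv_of_ne_of_mem_pair (hψ.edgeLabel_eq hs x) (hψ.edgeLabel_eq hs (x * t)) hne.symm]
    at hsquare hne
  have hflip : edgeLabel ψ (x * s) t ≠ edgeLabel ψ x t := by
    intro h
    rw [h, mul_comm] at hsquare
    exact hne (mul_left_cancel hsquare).symm
  refine ⟨hflip, ?_⟩
  rw [eq_inv_of_ne_of_mem_pair (hψ.edgeLabel_eq ht x) (hψ.edgeLabel_eq ht (x * s)) hflip.symm,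
    ← div_eq_mul_inv, ← div_eq_mul_inv, div_eq_div_iff_mul_eq_mul] at hsquare
  rw [sq, sq, hsquare]

theorem ColourPreserving.edgeLabel_mul_eq [Finite G] (hG : {g : G | orderOf g = 2}.Subsingleton)
    (hψ : ColourPreserving S ψ) (hinj : Injective ψ) (hs : s ∈ S) (ht : t ∈ S) (x : G) :
    edgeLabel ψ (x * t) s = edgeLabel ψ x s := by
  by_contra hne
  obtain ⟨hflip, hsq⟩ := hψ.edgeLabel_flip hs ht hne
  have hs2 : s * s ≠ 1 := fun h => hne (by
    rw [hψ.edgeLabel_eq_self_of_mul_self hs h, hψ.edgeLabel_eq_self_of_mul_self hs h])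
  have ht2 : t * t ≠ 1 := fun h => hflip (by
    rw [hψ.edgeLabel_eq_self_of_mul_self ht h, hψ.edgeLabel_eq_self_of_mul_self ht h])
  have hts : t ∉ Subgroup.zpowers s :=
    fun h => hne (hψ.edgeLabel_mul_mem_zpowers hinj hs hs2 h x)
  have hst : s ∉ Subgroup.zpowers t :=
    fun h => hflip (hψ.edgeLabel_mul_mem_zpowers hinj ht ht2 h x)
  rcases zpowers_le_or_le_of_sq_eq_sq hG hsq with h | h <;>
    rw [zpowers_eq_of_mem_pair (hψ.edgeLabel_eq hs x),
      zpowers_eq_of_mem_pair (hψ.edgeLabel_eq ht x)] at h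
  exacts [hst (h (Subgroup.mem_zpowers s)), hts (h (Subgroup.mem_zpowers t))]

theorem isCCA_of_subsingleton_orderOf_eq_two [Finite G]
    (hG : {g : G | orderOf g = 2}.Subsingleton) : IsCCA G :=
  isCCA_of_forall_map_mul fun S _ hS ψ hψ hcp h1 =>
    map_mul_of_closure_eq_top hS h1 fun x s hs => by
      rw [← mul_edgeLabel ψ, ← edgeLabel_one h1 s,
        apply_eq_of_closure_eq_top hS (f := fun x => edgeLabel ψ x s)
          (fun x _ ht => hcp.edgeLabel_mul_eq hG hψ.1 hs ht x) x 1]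

end CommGroup

theorem IsCyclic.subsingleton_orderOf_eq_two {G : Type*} [Group G] [Finite G] [IsCyclic G] :
    {g : G | orderOf g = 2}.Subsingleton := by
  classical
  have := Fintype.ofFinite G
  intro a (ha : orderOf a = 2) b (hb : orderOf b = 2)
  by_contra hab
  have h1 : ∀ {g : G}, orderOf g = 2 → g ≠ 1 := fun h hg => by simp [hg] at h
  have hsub : ({1, a, b} : Finset G) ⊆ Finset.univ.filter fun g => g ^ 2 = 1 := by
    intro g hg
    simp only [Finset.mem_insert, Finset.mem_singleton] at hg
    simp only [Finset.mem_filter, Finset.mem_univ, true_and]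
    rcases hg with rfl | rfl | rfl
    exacts [one_pow 2, ha ▸ pow_orderOf_eq_one g, hb ▸ pow_orderOf_eq_one g]
  have := (Finset.card_le_card hsub).trans (IsCyclic.card_pow_eq_one_le two_pos)
  rw [Finset.card_insert_of_notMem (by simp [(h1 ha).symm, (h1 hb).symm]),
    Finset.card_pair hab] at this
  omega

theorem IsCyclic.isCCA {G : Type*} [Group G] [Finite G] [IsCyclic G] : IsCCA G :=
  letI := IsCyclic.commGroup (α := G)
  isCCA_of_subsingleton_orderOf_eq_two IsCyclic.subsingleton_orderOf_eq_two

section GeneralizedDihedral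

/-- `D` is the generalized dihedral group over `A`; taking `a = 1` in `mul_mul_eq_inv` shows
that every element outside `A` is an involution. -/
structure IsGeneralizedDihedral {D : Type*} [Group D] (A : Subgroup D) : Prop where
  index_eq_two : A.index = 2
  mul_mul_eq_inv : ∀ f ∉ A, ∀ a ∈ A, f * a * f = a⁻¹

variable {D : Type*} [Group D] {A : Subgroup D} {S : Set D} {ψ : D → D}

theorem exists_mem_notMem_of_closure_eq_top (hA : A ≠ ⊤) (hS : Subgroup.closure S = ⊤) :
    ∃ τ ∈ S, τ ∉ A := by
  by_contra! h
  exact hA (top_le_iff.mp (hS ▸ (Subgroup.closure_le A).mpr h))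

theorem Subtype.map_bijective_of_iff {α : Type*} {p : α → Prop} {f : α → α} (hf : Bijective f)
    (hp : ∀ x, p (f x) ↔ p x) : Bijective (Subtype.map f fun x => (hp x).2) := by
  refine ⟨fun a b h => Subtype.ext (hf.1 (congrArg Subtype.val h)), fun b => ?_⟩
  obtain ⟨x, hx⟩ := hf.2 b
  exact ⟨⟨x, (hp x).1 (hx ▸ b.2)⟩, Subtype.ext hx⟩

theorem ColourPreserving.mem_iff_of_index_eq_two (hψ : ColourPreserving S ψ) (hA : A.index = 2)
    (hS : Subgroup.closure S = ⊤) (h1 : ψ 1 = 1) (x : D) : ψ x ∈ A ↔ x ∈ A := by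
  have hstep : ∀ x, ∀ s ∈ S, (ψ (x * s) ∈ A ↔ x * s ∈ A) = (ψ x ∈ A ↔ x ∈ A) := by
    intro x s hs
    rcases hψ x s hs with h | h <;>
      simp only [h, Subgroup.mul_mem_iff_of_index_two hA, inv_mem_iff, eq_iff_iff] <;> tauto
  simpa [h1] using apply_eq_of_closure_eq_top hS (f := fun x => (ψ x ∈ A ↔ x ∈ A)) hstep x 1

namespace IsGeneralizedDihedral

variable {f a σ : D}

theorem of_conj {σ : D} (hindex : A.index = 2) (hσ : σ ∉ A) (hσ2 : σ ^ 2 = 1)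
    (hconj : ∀ a ∈ A, σ * a * σ⁻¹ = a⁻¹) : IsGeneralizedDihedral A where
  index_eq_two := hindex
  mul_mul_eq_inv f hf a ha := by
    have hσf : σ * f ∈ A := (Subgroup.mul_mem_iff_of_index_two hindex).mpr (iff_of_false hσ hf)
    have hσinv : σ⁻¹ = σ := inv_eq_of_mul_eq_one_right (by rwa [← sq])
    calc f * a * f = σ⁻¹ * (σ * f * a) * σ⁻¹ * (σ * f) := by group
      _ = σ * (σ * f * a) * σ⁻¹ * (σ * f) := by nth_rewrite 1 [hσinv]; rfl
      _ = (σ * f * a)⁻¹ * (σ * f) := by rw [hconj _ (mul_mem hσf ha)]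
      _ = a⁻¹ := by group

theorem mul_mem_iff (hA : IsGeneralizedDihedral A) {x y : D} :
    x * y ∈ A ↔ (x ∈ A ↔ y ∈ A) :=
  Subgroup.mul_mem_iff_of_index_two hA.index_eq_two

theorem mul_self (hA : IsGeneralizedDihedral A) (hf : f ∉ A) : f * f = 1 := by
  simpa using hA.mul_mul_eq_inv f hf 1 A.one_mem

theorem inv_eq (hA : IsGeneralizedDihedral A) (hf : f ∉ A) : f⁻¹ = f :=
  inv_eq_of_mul_eq_one_right (hA.mul_self hf)

theorem mul_eq_inv_mul (hA : IsGeneralizedDihedral A) (hf : f ∉ A) (ha : a ∈ A) :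
    f * a = a⁻¹ * f := by
  rw [← hA.mul_mul_eq_inv f hf a ha, mul_assoc (f * a), hA.mul_self hf, mul_one]

theorem ne_top (hA : IsGeneralizedDihedral A) : A ≠ ⊤ := fun h => by
  simpa [h] using hA.index_eq_two

theorem exists_eq_mul (hA : IsGeneralizedDihedral A) (hσ : σ ∉ A) {d : D} (hd : d ∉ A) :
    ∃ a : A, d = a * σ :=
  ⟨⟨d * σ, hA.mul_mem_iff.mpr (iff_of_false hd hσ)⟩, by
    rw [mul_assoc, hA.mul_self hσ, mul_one]⟩

end IsGeneralizedDihedral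

theorem ColourPreserving.map_mul_of_notMem (hψ : ColourPreserving S ψ)
    (hA : IsGeneralizedDihedral A) {f : D} (hf : f ∈ S) (hfA : f ∉ A) (x : D) :
    ψ (x * f) = ψ x * f :=
  (hψ x f hf).elim id fun h => h.trans (by rw [hA.inv_eq hfA])

/-- A path of two reflection edges of `Cay(D;S)` becomes one edge of the Cayley graph on `A`. -/
def evenConnectionSet (A : Subgroup D) (S : Set D) : Set A :=
  A.subtype ⁻¹' (S ∪ (S \ A) * (S \ A))

namespace IsGeneralizedDihedral

theorem inv_evenConnectionSet (hA : IsGeneralizedDihedral A) (hS : S⁻¹ = S) :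
    (evenConnectionSet A S)⁻¹ = evenConnectionSet A S := by
  have hinv : ∀ t ∈ evenConnectionSet A S, t⁻¹ ∈ evenConnectionSet A S := by
    rintro t (ht | ⟨f, ⟨hf, hfA⟩, g, ⟨hg, hgA⟩, hfg⟩)
    · exact Or.inl (hS ▸ Set.inv_mem_inv.mpr ht)
    · refine Or.inr ?_
      change f * g = (t : D) at hfg
      change ((t : D))⁻¹ ∈ _
      rw [← hfg, mul_inv_rev, hA.inv_eq hfA, hA.inv_eq hgA]
      exact Set.mul_mem_mul (Set.mem_sdiff_of_mem hg hgA) (Set.mem_sdiff_of_mem hf hfA)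
  ext t
  exact ⟨fun h => inv_inv t ▸ hinv _ h, hinv t⟩

theorem closure_evenConnectionSet (hA : IsGeneralizedDihedral A) (hSinv : S⁻¹ = S)
    (hS : Subgroup.closure S = ⊤) : Subgroup.closure (evenConnectionSet A S) = ⊤ := by
  obtain ⟨τ, hτS, hτA⟩ := exists_mem_notMem_of_closure_eq_top hA.ne_top hS
  set E := (Subgroup.closure (evenConnectionSet A S)).map A.subtype
  have hgen : ∀ s ∈ S, s ∈ A → s ∈ E := fun s hs hsA =>
    Subgroup.mem_map_of_mem A.subtype (Subgroup.subset_closure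
      (show (⟨s, hsA⟩ : A) ∈ evenConnectionSet A S from Or.inl hs))
  have hpair : ∀ f ∈ S, f ∉ A → ∀ g ∈ S, g ∉ A → f * g ∈ E := fun f hf hfA g hg hgA =>
    Subgroup.mem_map_of_mem A.subtype (Subgroup.subset_closure
      (show (⟨f * g, hA.mul_mem_iff.mpr (iff_of_false hfA hgA)⟩ : A) ∈ evenConnectionSet A S
        from Or.inr (Set.mul_mem_mul (Set.mem_sdiff_of_mem hf hfA) (Set.mem_sdiff_of_mem hg hgA))))
  have step : ∀ y, ∀ s ∈ S, ((y ∈ A → y ∈ E) ∧ (y ∉ A → y * τ ∈ E)) →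
      (y * s ∈ A → y * s ∈ E) ∧ (y * s ∉ A → y * s * τ ∈ E) := by
    rintro y s hs ⟨ihA, ihN⟩
    by_cases hy : y ∈ A <;> by_cases hsA : s ∈ A
    · exact ⟨fun _ => mul_mem (ihA hy) (hgen s hs hsA), fun h => (h (mul_mem hy hsA)).elim⟩
    · refine ⟨fun h => (hsA ((hA.mul_mem_iff.mp h).mp hy)).elim, fun _ => ?_⟩
      rw [mul_assoc]
      exact mul_mem (ihA hy) (hpair s hs hsA τ hτS hτA)
    · refine ⟨fun h => (hy ((hA.mul_mem_iff.mp h).mpr hsA)).elim, fun _ => ?_⟩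
      have hsτ := hA.mul_eq_inv_mul hτA (inv_mem hsA)
      rw [inv_inv] at hsτ
      rw [mul_assoc, ← hsτ, ← mul_assoc]
      exact mul_mem (ihN hy) (inv_mem (hgen s hs hsA))
    · refine ⟨fun _ => ?_, fun h => (h (hA.mul_mem_iff.mpr (iff_of_false hy hsA))).elim⟩
      rw [← mul_inv_cancel_right y τ, hA.inv_eq hτA, mul_assoc (y * τ)]
      exact mul_mem (ihN hy) (hpair τ hτS hτA s hs hsA)
  have key : ∀ y, (y ∈ A → y ∈ E) ∧ (y ∉ A → y * τ ∈ E) := fun y => by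
    induction (hS ▸ Subgroup.mem_top y : y ∈ Subgroup.closure S)
      using Subgroup.closure_induction_right with
    | one => exact ⟨fun _ => one_mem E, fun h => (h A.one_mem).elim⟩
    | mul_right y _ s hs ih => exact step y s hs ih
    | mul_inv_cancel y _ s hs ih => exact step y s⁻¹ (hSinv ▸ Set.inv_mem_inv.mpr hs) ih
  rw [eq_top_iff]
  rintro a -
  exact (Subgroup.mem_map_iff_mem A.subtype_injective).mp ((key a).1 a.2)

end IsGeneralizedDihedral

theorem ColourPreserving.restrict (hψ : ColourPreserving S ψ) (hA : IsGeneralizedDihedral A)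
    (hmem : ∀ x ∈ A, ψ x ∈ A) :
    ColourPreserving (evenConnectionSet A S) (Subtype.map ψ hmem) := by
  rintro ⟨a, ha⟩ ⟨t, ht⟩ (hts | ⟨f, ⟨hf, hfA⟩, g, ⟨hg, hgA⟩, hfg⟩)
  · rcases hψ a t hts with h | h
    exacts [Or.inl (Subtype.ext h), Or.inr (Subtype.ext h)]
  · refine Or.inl (Subtype.ext ?_)
    simp only [Subtype.map, Subgroup.coe_mul, Subgroup.coe_subtype] at hfg ⊢
    rw [← hfg, ← mul_assoc, hψ.map_mul_of_notMem hA hg hgA, hψ.map_mul_of_notMem hA hf hfA,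
      mul_assoc]

namespace IsGeneralizedDihedral

variable {τ σ : D}

theorem map_mul_of_mem (hA : IsGeneralizedDihedral A) (hτ : τ ∉ A)
    (hτψ : ∀ x, ψ (x * τ) = ψ x * τ) (hmem : ∀ x, ψ x ∈ A ↔ x ∈ A)
    (hmul : ∀ a ∈ A, ∀ b ∈ A, ψ (a * b) = ψ a * ψ b) (h1 : ψ 1 = 1) (x : D) {a : D}
    (ha : a ∈ A) : ψ (x * a) = ψ x * ψ a := by
  by_cases hx : x ∈ A
  · exact hmul x hx a ha
  have hxτ : x * τ ∈ A := hA.mul_mem_iff.mpr (iff_of_false hx hτ)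
  have hψx : ψ x = ψ (x * τ) * τ := by rw [← hτψ, mul_assoc, hA.mul_self hτ, mul_one]
  have hψinv : ψ a⁻¹ = (ψ a)⁻¹ :=
    eq_inv_of_mul_eq_one_left (by rw [← hmul _ (inv_mem ha) _ ha, inv_mul_cancel, h1])
  have hτa := hA.mul_eq_inv_mul hτ (inv_mem ha)
  rw [inv_inv] at hτa
  calc ψ (x * a) = ψ (x * τ * a⁻¹ * τ) := by
        rw [mul_assoc x τ, hτa, ← mul_assoc, mul_assoc, hA.mul_self hτ, mul_one]
    _ = ψ (x * τ) * (ψ a)⁻¹ * τ := by rw [hτψ, hmul _ hxτ _ (inv_mem ha), hψinv]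
    _ = ψ x * ψ a := by rw [hψx, mul_assoc, mul_assoc, hA.mul_eq_inv_mul hτ ((hmem a).2 ha)]

theorem isCCA (hA : IsGeneralizedDihedral A) (hAcca : IsCCA A) : IsCCA D := by
  refine isCCA_of_forall_map_mul fun S hSinv hS ψ hψ hcp h1 => ?_
  have hmem := hcp.mem_iff_of_index_eq_two hA.index_eq_two hS h1
  obtain ⟨τ, hτS, hτA⟩ := exists_mem_notMem_of_closure_eq_top hA.ne_top hS
  have hmul : ∀ a ∈ A, ∀ b ∈ A, ψ (a * b) = ψ a * ψ b := by
    have hrestrict := hAcca _ (hA.inv_evenConnectionSet hSinv)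
      (hA.closure_evenConnectionSet hSinv hS)
      (Equiv.ofBijective _ (Subtype.map_bijective_of_iff hψ hmem))
      (hcp.restrict hA fun x => (hmem x).2)
    exact fun a ha b hb =>
      congrArg Subtype.val (hrestrict.map_mul (Subtype.ext h1) ⟨a, ha⟩ ⟨b, hb⟩)
  refine map_mul_of_closure_eq_top hS h1 fun x s hs => ?_
  by_cases hsA : s ∈ A
  · exact hA.map_mul_of_mem hτA (hcp.map_mul_of_notMem hA hτS hτA) hmem hmul h1 x hsA
  · have hψs : ψ s = s := by simpa [h1] using hcp.map_mul_of_notMem hA hs hsA 1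
    rw [hcp.map_mul_of_notMem hA hs hsA, hψs]

section Extend

open scoped Classical in
/-- The extension of `ψ : A → A` to `D = A ∪ A * σ` by `ψ (a * σ) = ψ a * σ`. -/
noncomputable def extend (hA : IsGeneralizedDihedral A) (hσ : σ ∉ A) (ψ : A → A) (d : D) : D :=
  if h : d ∈ A then ψ ⟨d, h⟩ else ψ ⟨d * σ, hA.mul_mem_iff.mpr (iff_of_false h hσ)⟩ * σ

variable (hA : IsGeneralizedDihedral A) (hσ : σ ∉ A)

theorem extend_coe (ψ : A → A) (a : A) : hA.extend hσ ψ a = ψ a :=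
  dif_pos a.2

theorem extend_mul (ψ : A → A) (d : D) : hA.extend hσ ψ (d * σ) = hA.extend hσ ψ d * σ := by
  by_cases hd : d ∈ A
  · have hdσ : d * σ ∉ A := fun h => hσ ((hA.mul_mem_iff.mp h).mp hd)
    simp only [extend, dif_neg hdσ, dif_pos hd, mul_assoc, hA.mul_self hσ, mul_one]
  · have hdσ : d * σ ∈ A := hA.mul_mem_iff.mpr (iff_of_false hd hσ)
    simp only [extend, dif_pos hdσ, dif_neg hd, mul_assoc, hA.mul_self hσ, mul_one]

theorem extend_comp (ψ₁ ψ₂ : A → A) (d : D) :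
    hA.extend hσ (ψ₁ ∘ ψ₂) d = hA.extend hσ ψ₁ (hA.extend hσ ψ₂ d) := by
  by_cases hd : d ∈ A
  · lift d to A using hd
    simp only [extend_coe, comp_apply]
  · obtain ⟨a, rfl⟩ := hA.exists_eq_mul hσ hd
    simp only [extend_mul, extend_coe, comp_apply]

theorem extend_id (d : D) : hA.extend hσ id d = d := by
  by_cases hd : d ∈ A
  · lift d to A using hd
    simp only [extend_coe, id]
  · obtain ⟨a, rfl⟩ := hA.exists_eq_mul hσ hd
    simp only [extend_mul, extend_coe, id]

theorem bijective_extend {ψ : A → A} (hψ : Bijective ψ) : Bijective (hA.extend hσ ψ) := by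
  obtain ⟨ψ', hleft, hright⟩ := bijective_iff_has_inverse.mp hψ
  refine bijective_iff_has_inverse.mpr ⟨hA.extend hσ ψ', fun d => ?_, fun d => ?_⟩
  · rw [← extend_comp, hleft.comp_eq_id, extend_id]
  · rw [← extend_comp, hright.comp_eq_id, extend_id]

end Extend

variable {T : Set A}

theorem colourPreserving_extend (hA : IsGeneralizedDihedral A) (hσ : σ ∉ A) {ψ : A → A}
    (hψ : ColourPreserving T ψ) : ColourPreserving (A.subtype '' T ∪ {σ}) (hA.extend hσ ψ) := by
  have hσu (u : A) : σ * u = (u : D)⁻¹ * σ := hA.mul_eq_inv_mul hσ u.2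
  have hcoset (c u : A) : (c : D) * σ = ↑(c * u) * σ * u := by
    rw [Subgroup.coe_mul, mul_assoc _ σ, hσu, mul_assoc, mul_inv_cancel_left]
  rintro x s (⟨t, ht, rfl⟩ | rfl)
  · rw [Subgroup.coe_subtype]
    by_cases hx : x ∈ A
    · lift x to A using hx
      rw [← Subgroup.coe_mul, hA.extend_coe, hA.extend_coe]
      exact (hψ x t ht).imp (congrArg Subtype.val) (congrArg Subtype.val)
    · obtain ⟨b, rfl⟩ := hA.exists_eq_mul hσ hx
      have hxt : (b : D) * σ * t = ↑(b * t⁻¹) * σ := by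
        rw [hcoset b t⁻¹, InvMemClass.coe_inv, inv_mul_cancel_right]
      rw [hxt, hA.extend_mul, hA.extend_mul, hA.extend_coe, hA.extend_coe]
      rcases hψ (b * t⁻¹) t ht with h | h <;> rw [inv_mul_cancel_right] at h <;> rw [h]
      · exact Or.inl (hcoset _ t)
      · simpa using Or.inr (hcoset _ t⁻¹)
  · exact Or.inl (hA.extend_mul hσ ψ x)

theorem inv_image_union_singleton (hA : IsGeneralizedDihedral A) (hσ : σ ∉ A) (hT : T⁻¹ = T) :
    (A.subtype '' T ∪ {σ})⁻¹ = A.subtype '' T ∪ {σ} := by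
  rw [Set.union_inv, ← Set.image_inv, hT, Set.inv_singleton, hA.inv_eq hσ]

theorem closure_image_union_singleton (hA : IsGeneralizedDihedral A) (hσ : σ ∉ A)
    (hT : Subgroup.closure T = ⊤) : Subgroup.closure (A.subtype '' T ∪ {σ}) = ⊤ := by
  have hAle : ∀ a ∈ A, a ∈ Subgroup.closure (A.subtype '' T ∪ {σ}) := fun a ha => by
    have := Subgroup.mem_map_of_mem A.subtype (hT ▸ Subgroup.mem_top (⟨a, ha⟩ : A))
    rw [MonoidHom.map_closure] at this
    exact Subgroup.closure_mono Set.subset_union_left this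
  rw [eq_top_iff]
  rintro d -
  by_cases hd : d ∈ A
  · exact hAle d hd
  · obtain ⟨a, rfl⟩ := hA.exists_eq_mul hσ hd
    exact mul_mem (hAle a a.2) (Subgroup.subset_closure (Or.inr rfl))

theorem isCCA_subgroup (hA : IsGeneralizedDihedral A) (hσ : σ ∉ A) (hD : IsCCA D) : IsCCA A := by
  refine isCCA_of_forall_map_mul fun T hTinv hT ψ hψ hcp h1 a b => Subtype.ext ?_
  have hφ := hD _ (hA.inv_image_union_singleton hσ hTinv)
    (hA.closure_image_union_singleton hσ hT) (Equiv.ofBijective _ (hA.bijective_extend hσ hψ))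
    (hA.colourPreserving_extend hσ hcp)
  have h1' : hA.extend hσ ψ (1 : A) = 1 := by rw [hA.extend_coe, h1, OneMemClass.coe_one]
  have : hA.extend hσ ψ (a * b) = hA.extend hσ ψ a * hA.extend hσ ψ b := hφ.map_mul h1' a b
  rwa [← Subgroup.coe_mul, hA.extend_coe, hA.extend_coe, hA.extend_coe] at this

end IsGeneralizedDihedral

end GeneralizedDihedral

namespace DihedralGroup

variable {n : ℕ}

theorem r_mem_zpowers_r_one (i : ZMod n) : r i ∈ Subgroup.zpowers (r 1 : DihedralGroup n) :=
  Subgroup.mem_zpowers_iff.mpr ⟨i.cast, by rw [r_one_zpow, ZMod.intCast_zmod_cast]⟩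

theorem sr_notMem_zpowers_r_one (i : ZMod n) :
    sr i ∉ Subgroup.zpowers (r 1 : DihedralGroup n) := by
  rintro ⟨k, hk⟩
  simp at hk

theorem isGeneralizedDihedral_zpowers_r_one (n : ℕ) :
    IsGeneralizedDihedral (Subgroup.zpowers (r 1 : DihedralGroup n)) where
  index_eq_two := Subgroup.index_eq_two_iff.mpr ⟨sr 0, fun b => by
    cases b <;> simp [r_mul_sr, sr_mul_sr, r_mem_zpowers_r_one, sr_notMem_zpowers_r_one]⟩
  mul_mul_eq_inv f hf a ha := by
    cases f with
    | r i => exact absurd (r_mem_zpowers_r_one i) hf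
    | sr i =>
      cases a with
      | r j => simp [sr_mul_r, sr_mul_sr, inv_r]
      | sr j => exact absurd ha (sr_notMem_zpowers_r_one j)

theorem isCCA [NeZero n] : IsCCA (DihedralGroup n) :=
  (isGeneralizedDihedral_zpowers_r_one n).isCCA IsCyclic.isCCA

end DihedralGroup

/-- The generalized dihedral group `D` over a finite abelian group `A` is CCA iff `A`
is CCA; in particular, every (finite) dihedral group is CCA. -/
theorem stmt_16 :
    (∀ (D : Type) [Group D] [Finite D] (A : Subgroup D) (σ : D),
      (∀ a b : A, a * b = b * a) → A.index = 2 → σ ∉ A → σ ^ 2 = 1 →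
      (∀ a ∈ A, σ * a * σ⁻¹ = a⁻¹) → (IsCCA D ↔ IsCCA A)) ∧
    (∀ n : ℕ, 0 < n → IsCCA (DihedralGroup n)) := by
  refine ⟨fun D _ _ A σ _ hindex hσ hσ2 hconj => ?_, fun n hn => ?_⟩
  · have hA := IsGeneralizedDihedral.of_conj hindex hσ hσ2 hconj
    exact ⟨hA.isCCA_subgroup hσ, hA.isCCA⟩
  · have : NeZero n := ⟨hn.ne'⟩
    exact DihedralGroup.isCCA
end

section
/- Let C be a cyclic normal subgroup of a finite group H such that |C| is coprime to the index |H:C|, and no element of H ∖ C centralizes C. Then for every automorphism α of H and every h ∈ H, α(h) ∈ hC. -/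
/-!
An automorphism `α` maps `C` to itself, since a normal Hall subgroup is characteristic. As `C` is
cyclic, conjugation by `h` acts on `C` as a power map `c ↦ c ^ m`, and transporting this along `α`
shows that conjugation by `α h` is the same power map. Hence `h⁻¹ * α h` centralizes `C`, and the
centralizer of `C` is contained in `C`.
-/

namespace Subgroup

variable {G : Type*} [Group G]

theorem characteristic_of_coprime_index (N : Subgroup G) [N.Normal]
    (hN : (Nat.card N).Coprime N.index) : N.Characteristic := by
  refine characteristic_iff_le_comap.mpr fun φ c hc => ?_
  rw [mem_comap, ← QuotientGroup.eq_one_iff]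
  have h_dvd_card : orderOf (φ c : G ⧸ N) ∣ Nat.card N :=
    calc orderOf (φ c : G ⧸ N) ∣ orderOf (φ c) := orderOf_map_dvd (QuotientGroup.mk' N) (φ c)
      _ = orderOf c := orderOf_injective φ.toMonoidHom φ.injective c
      _ ∣ Nat.card N := N.orderOf_dvd_natCard hc
  have h_dvd_index : orderOf (φ c : G ⧸ N) ∣ N.index := _root_.orderOf_dvd_natCard _
  exact orderOf_eq_one_iff.mp (Nat.eq_one_of_dvd_coprimes hN h_dvd_card h_dvd_index)

theorem inv_mul_mem_centralizer_iff {a b : G} {s : Set G} :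
    b⁻¹ * a ∈ centralizer s ↔ ∀ c ∈ s, a * c * a⁻¹ = b * c * b⁻¹ := by
  refine mem_centralizer_iff.trans (forall₂_congr fun c _ => ?_)
  constructor <;> intro h
  · calc a * c * a⁻¹ = b * (b⁻¹ * a * c) * a⁻¹ := by group
      _ = b * c * b⁻¹ := by rw [← h]; group
  · calc c * (b⁻¹ * a) = b⁻¹ * (b * c * b⁻¹) * a := by group
      _ = b⁻¹ * a * c := by rw [← h]; group

theorem exists_zpow_eq_conj_of_isCyclic (C : Subgroup G) [C.Normal] [IsCyclic C] (g : G) :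
    ∃ m : ℤ, ∀ c ∈ C, g * c * g⁻¹ = c ^ m := by
  obtain ⟨m, hm⟩ := (MulAut.conjNormal (H := C) g).toMonoidHom.map_cyclic
  exact ⟨m, fun c hc => by simpa using congrArg Subtype.val (hm ⟨c, hc⟩)⟩

theorem conj_map_eq_conj_of_isCyclic (C : Subgroup G) [C.Normal] [C.Characteristic] [IsCyclic C]
    (α : G ≃* G) (g : G) {c : G} (hc : c ∈ C) : α g * c * (α g)⁻¹ = g * c * g⁻¹ := by
  obtain ⟨m, hm⟩ := C.exists_zpow_eq_conj_of_isCyclic g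
  have hc' : α.symm c ∈ C := characteristic_iff_le_comap.mp ‹_› α.symm hc
  calc α g * c * (α g)⁻¹ = α (g * α.symm c * g⁻¹) := by simp
    _ = c ^ m := by rw [hm _ hc', map_zpow, α.apply_symm_apply]
    _ = g * c * g⁻¹ := (hm c hc).symm

theorem inv_mul_map_mem_centralizer_of_isCyclic (C : Subgroup G) [C.Normal] [C.Characteristic]
    [IsCyclic C] (α : G ≃* G) (g : G) : g⁻¹ * α g ∈ centralizer (C : Set G) :=
  inv_mul_mem_centralizer_iff.mpr fun _ hc => C.conj_map_eq_conj_of_isCyclic α g hc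

end Subgroup

theorem stmt_18_general {H : Type*} [Group H] (C : Subgroup H) [C.Normal]
    (hcyc : IsCyclic C) (hcop : Nat.Coprime (Nat.card C) C.index)
    (hcent : ∀ h : H, h ∉ C → ∃ c ∈ C, h * c ≠ c * h)
    (α : H ≃* H) (h : H) : h⁻¹ * α h ∈ C := by
  have : C.Characteristic := C.characteristic_of_coprime_index hcop
  have hcentralizer : Subgroup.centralizer (C : Set H) ≤ C := fun x hx => by
    by_contra hxC
    obtain ⟨c, hc, hne⟩ := hcent x hxC
    exact hne (Subgroup.mem_centralizer_iff.mp hx c hc).symm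
  exact hcentralizer (C.inv_mul_map_mem_centralizer_of_isCyclic α h)

/-- If `C` is a cyclic normal subgroup of `H` with `|C|` coprime to `|H:C|` and no
element of `H ∖ C` centralizes `C`, then every automorphism `α` of `H` satisfies
`α(h) ∈ hC`, i.e. `h⁻¹ α(h) ∈ C`. -/
theorem stmt_18 {H : Type*} [Group H] [Finite H] (C : Subgroup H) [C.Normal]
    (hcyc : IsCyclic C) (hcop : Nat.Coprime (Nat.card C) C.index)
    (hcent : ∀ h : H, h ∉ C → ∃ c ∈ C, h * c ≠ c * h)
    (α : H ≃* H) (h : H) : h⁻¹ * α h ∈ C :=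
  stmt_18_general C hcyc hcop hcent α h
end

section
/- A finite group G is CCA if and only if for every symmetric generating set S of G in which every element has prime-power order, the Cayley graph Cay(G;S) is CCA. The same equivalence holds for strongly CCA. -/
/-!
A colour-preserving (or colour-permuting) bijection `φ` of `Cay(G;S)` never turns back along a
walk `x, xs, xs², …`, by injectivity, so `φ (x * s ^ k) = φ x * t ^ (±k)` for a single sign.
Hence `φ` also preserves (permutes) the colours of `Cay(G;S')`, where `S'` is the set of powers
of elements of `S` that have prime-power order. This `S'` is symmetric and generates the same
subgroup as `S`: if `g` has order `a * b` with `a, b` coprime, Bézout recovers `g` from `g ^ a`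
and `g ^ b`, which have smaller orders.
-/

open Function Subgroup

section PrimePowComponents

variable {G : Type*} [Group G]

def primePowComponents (S : Set G) : Set G :=
  {t | ∃ s ∈ S, ∃ k : ℤ, s ^ k = t ∧ IsPrimePow (orderOf t)}

lemma isPrimePow_orderOf_of_mem_primePowComponents {S : Set G} {t : G}
    (ht : t ∈ primePowComponents S) : IsPrimePow (orderOf t) := by
  obtain ⟨-, -, -, -, h⟩ := ht
  exact h

lemma inv_mem_primePowComponents {S : Set G} {t : G} (ht : t ∈ primePowComponents S) :
    t⁻¹ ∈ primePowComponents S := by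
  obtain ⟨s, hs, k, rfl, hk⟩ := ht
  exact ⟨s, hs, -k, zpow_neg s k, by rwa [orderOf_inv]⟩

lemma primePowComponents_inv (S : Set G) :
    (primePowComponents S)⁻¹ = primePowComponents S :=
  Set.ext fun t => ⟨fun ht => inv_inv t ▸ inv_mem_primePowComponents ht,
    inv_mem_primePowComponents⟩

lemma primePowComponents_mono {S T : Set G} (h : S ⊆ T) :
    primePowComponents S ⊆ primePowComponents T := by
  rintro t ⟨s, hs, k, hk⟩
  exact ⟨s, h hs, k, hk⟩

lemma primePowComponents_singleton_pow_subset (g : G) (n : ℕ) :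
    primePowComponents {g ^ n} ⊆ primePowComponents {g} := by
  rintro t ⟨_, rfl, k, rfl, ht⟩
  exact ⟨g, rfl, n * k, by rw [zpow_mul, zpow_natCast], ht⟩

lemma Subgroup.mem_of_pow_mem_of_coprime {H : Subgroup G} {g : G} {a b : ℕ}
    (hab : a.Coprime b) (ha : g ^ a ∈ H) (hb : g ^ b ∈ H) : g ∈ H := by
  obtain ⟨u, v, huv⟩ := Nat.isCoprime_iff_coprime.mpr hab
  have hg : g = (g ^ a) ^ u * (g ^ b) ^ v := by
    rw [← zpow_natCast, ← zpow_natCast, ← zpow_mul, ← zpow_mul, ← zpow_add,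
      mul_comm (a : ℤ), mul_comm (b : ℤ), huv, zpow_one]
  rw [hg]
  exact H.mul_mem (H.zpow_mem ha u) (H.zpow_mem hb v)

lemma mem_closure_primePowComponents_singleton {g : G} (hg : IsOfFinOrder g) :
    g ∈ closure (primePowComponents {g}) := by
  suffices ∀ n ≠ 0, ∀ g : G, orderOf g = n → g ∈ closure (primePowComponents {g}) from
    this _ hg.orderOf_pos.ne' g rfl
  intro n
  induction n using Nat.recOnPosPrimePosCoprime with
  | prime_pow p k hp hk =>
    intro _ g hg
    exact subset_closure ⟨g, rfl, 1, zpow_one g, hg ▸ ⟨p, k, hp.prime, hk, rfl⟩⟩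
  | zero => exact fun h => absurd rfl h
  | one =>
    intro _ g hg
    rw [orderOf_eq_one_iff.mp hg]
    exact one_mem _
  | coprime a b ha hb hab iha ihb =>
    intro _ g hg
    have hga : g ^ a ∈ closure (primePowComponents {g}) := by
      refine closure_mono (primePowComponents_singleton_pow_subset g a) (ihb (by omega) _ ?_)
      rw [orderOf_pow_of_dvd (by omega) (hg ▸ dvd_mul_right a b), hg,
        Nat.mul_div_cancel_left b (by omega)]
    have hgb : g ^ b ∈ closure (primePowComponents {g}) := by
      refine closure_mono (primePowComponents_singleton_pow_subset g b) (iha (by omega) _ ?_)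
      rw [orderOf_pow_of_dvd (by omega) (hg ▸ dvd_mul_left b a), hg,
        Nat.mul_div_cancel a (by omega)]
    exact mem_of_pow_mem_of_coprime hab hga hgb

lemma closure_primePowComponents [Finite G] (S : Set G) :
    closure (primePowComponents S) = closure S := by
  refine le_antisymm ?_ ?_ <;> rw [closure_le]
  · rintro _ ⟨s, hs, k, rfl, -⟩
    exact zpow_mem (subset_closure hs) k
  · intro s hs
    exact closure_mono (primePowComponents_mono (Set.singleton_subset_iff.mpr hs))
      (mem_closure_primePowComponents_singleton (isOfFinOrder_of_finite s))

end PrimePowComponents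

section Walks

variable {G : Type*} [Group G] {φ : G → G} {s t : G}

lemma eq_mul_zpow_of_forall_succ {f : ℤ → G} {u : G} (h : ∀ k, f (k + 1) = f k * u) (k : ℤ) :
    f k = f 0 * u ^ k := by
  induction k using Int.induction_on with
  | zero => simp
  | succ k ih => rw [h, ih, mul_assoc, zpow_add_one]
  | pred k ih =>
    rw [eq_mul_inv_of_mul_eq (h _).symm, sub_add_cancel, ih, mul_assoc, zpow_sub_one]

/-- Turning back would give `φ (x * s * s) = φ x`, impossible for injective `φ` unless
`s * s = 1`, in which case `t⁻¹ = t` anyway. -/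
lemma step_eq_of_step (hφ : Injective φ) (hinv : s * s = 1 → t * t = 1)
    (hstep : ∀ x, φ (x * s) = φ x * t ∨ φ (x * s) = φ x * t⁻¹) {x u : G}
    (hu : u = t ∨ u = t⁻¹) (hx : φ (x * s) = φ x * u) :
    φ (x * s * s) = φ (x * s) * u := by
  have hback : φ (x * s * s) = φ (x * s) * u⁻¹ → φ (x * s * s) = φ (x * s) * u := by
    intro h
    have hss : x * s * s = x := hφ (by rw [h, hx, mul_inv_cancel_right])
    have ht : t⁻¹ = t := inv_eq_of_mul_eq_one_right (hinv (by simpa [mul_assoc] using hss))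
    rcases hu with rfl | rfl <;> simpa [ht] using h
  rcases hu with rfl | rfl <;> rcases hstep (x * s) with h | h
  · exact h
  · exact hback h
  · exact hback (by rwa [inv_inv])
  · exact h

lemma exists_zpow_of_step (hφ : Injective φ) (hinv : s * s = 1 → t * t = 1)
    (hstep : ∀ x, φ (x * s) = φ x * t ∨ φ (x * s) = φ x * t⁻¹) (x : G) :
    ∃ u, (u = t ∨ u = t⁻¹) ∧ ∀ k : ℤ, φ (x * s ^ k) = φ x * u ^ k := by
  have hstep' : ∀ y, ∃ u, (u = t ∨ u = t⁻¹) ∧ φ (y * s) = φ y * u := fun y =>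
    (hstep y).elim (fun h => ⟨t, .inl rfl, h⟩) (fun h => ⟨t⁻¹, .inr rfl, h⟩)
  obtain ⟨u, hu, hxu⟩ := hstep' x
  have hsucc : ∀ k : ℤ, φ (x * s ^ k * s) = φ (x * s ^ k) * u := by
    intro k
    induction k using Int.induction_on with
    | zero => simpa using hxu
    | succ k ih =>
      rw [zpow_add_one, ← mul_assoc]
      exact step_eq_of_step hφ hinv hstep hu ih
    | pred k ih =>
      rw [show x * s ^ (-(k : ℤ)) = x * s ^ (-(k : ℤ) - 1) * s by
        rw [mul_assoc, ← zpow_add_one, sub_add_cancel]] at ih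
      obtain ⟨v, hv, hyv⟩ := hstep' (x * s ^ (-(k : ℤ) - 1))
      obtain rfl : v = u := mul_left_cancel ((step_eq_of_step hφ hinv hstep hv hyv).symm.trans ih)
      exact hyv
  refine ⟨u, hu, fun k => ?_⟩
  simpa using eq_mul_zpow_of_forall_succ (f := fun k => φ (x * s ^ k))
    (fun k => by rw [zpow_add_one, ← mul_assoc]; exact hsucc k) k

lemma orderOf_eq_of_forall_zpow (hφ : Injective φ) {x u : G}
    (h : ∀ k : ℤ, φ (x * s ^ k) = φ x * u ^ k) : orderOf u = orderOf s :=
  orderOf_eq_orderOf_iff.mpr fun n => by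
    calc u ^ n = 1 ↔ φ x * u ^ n = φ x := mul_eq_left.symm
      _ ↔ φ (x * s ^ n) = φ x := by rw [← zpow_natCast, ← h, zpow_natCast]
      _ ↔ x * s ^ n = x := hφ.eq_iff
      _ ↔ s ^ n = 1 := mul_eq_left

end Walks

section CayleyGraphs

variable {G : Type*} [Group G] {S : Set G} {φ : G → G}

lemma ColourPreserving.toPrimePowComponents (hφ : Injective φ) (h : ColourPreserving S φ) :
    ColourPreserving (primePowComponents S) φ := by
  rintro x _ ⟨s, hs, k, rfl, -⟩
  obtain ⟨u, hu | hu, hk⟩ := exists_zpow_of_step hφ id (h · s hs) x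
  · exact .inl (hu ▸ hk k)
  · exact .inr (by rw [hk, hu, inv_zpow])

lemma ColourPermuting.toPrimePowComponents [Finite G] (hφ : Injective φ)
    (h : ColourPermuting S φ) : ColourPermuting (primePowComponents S) φ := by
  obtain ⟨π, hπS, hπinv, hstep⟩ := h
  have hwalk (s : G) (hs : s ∈ S) (x : G) :
      ∃ u, (u = π s ∨ u = (π s)⁻¹) ∧ ∀ k : ℤ, φ (x * s ^ k) = φ x * u ^ k := by
    refine exists_zpow_of_step hφ (fun hss => ?_) (hstep · s hs) x
    rw [mul_eq_one_iff_eq_inv, ← hπinv s hs, inv_eq_of_mul_eq_one_right hss]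
  have hbase (s : G) (hs : s ∈ S) : ∃ u, (u = π s ∨ u = (π s)⁻¹) ∧
      ∀ k : ℤ, (φ 1)⁻¹ * φ (s ^ k) = u ^ k ∧ orderOf (u ^ k) = orderOf (s ^ k) := by
    obtain ⟨u, hu, hk⟩ := hwalk s hs 1
    refine ⟨u, hu, fun k => ⟨by rw [← one_mul (s ^ k), hk, inv_mul_cancel_left], ?_⟩⟩
    exact orderOf_eq_of_forall_zpow hφ fun j => by rw [← zpow_mul, ← zpow_mul, hk]
  have hmaps : Set.MapsTo (fun t => (φ 1)⁻¹ * φ t) (primePowComponents S)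
      (primePowComponents S) := by
    rintro _ ⟨s, hs, k, rfl, hord⟩
    obtain ⟨u, hu, hk⟩ := hbase s hs
    simp only [(hk k).1]
    refine ⟨π s, hπS.mapsTo hs, ?_⟩
    rcases hu with rfl | rfl
    · exact ⟨k, rfl, (hk k).2 ▸ hord⟩
    · exact ⟨-k, by rw [zpow_neg, inv_zpow], (hk k).2 ▸ hord⟩
  refine ⟨fun t => (φ 1)⁻¹ * φ t,
    ((Set.toFinite _).injOn_iff_bijOn_of_mapsTo hmaps).mp
      fun a _ b _ hab => hφ (mul_left_cancel hab), ?_, ?_⟩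
  · rintro _ ⟨s, hs, k, rfl, -⟩
    obtain ⟨u, -, hk⟩ := hbase s hs
    simp only
    rw [← zpow_neg, (hk _).1, (hk _).1, zpow_neg]
  · rintro x _ ⟨s, hs, k, rfl, -⟩
    obtain ⟨u, hu, hu1⟩ := hbase s hs
    obtain ⟨v, hv, hvx⟩ := hwalk s hs x
    simp only [hvx, (hu1 k).1]
    rcases hu with rfl | rfl <;> rcases hv with rfl | rfl <;> simp

end CayleyGraphs

/-- `G` is (strongly) CCA iff every connected Cayley graph on `G` whose symmetric
generating set consists of elements of prime-power order is (strongly) CCA. -/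
theorem stmt_19 {G : Type*} [Group G] [Finite G] :
    (IsCCA G ↔ ∀ S : Set G, S⁻¹ = S → Subgroup.closure S = ⊤ →
      (∀ s ∈ S, IsPrimePow (orderOf s)) →
      ∀ φ : Equiv.Perm G, ColourPreserving S ⇑φ → IsAffineMap ⇑φ) ∧
    (IsStronglyCCA G ↔ ∀ S : Set G, S⁻¹ = S → Subgroup.closure S = ⊤ →
      (∀ s ∈ S, IsPrimePow (orderOf s)) →
      ∀ φ : Equiv.Perm G, ColourPermuting S ⇑φ → IsAffineMap ⇑φ) := by
  have hgen {S : Set G} (hS : closure S = ⊤) : closure (primePowComponents S) = ⊤ := by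
    rw [closure_primePowComponents, hS]
  refine ⟨⟨fun h S hS hgS _ φ hφ => h S hS hgS φ hφ, fun h S _ hgS φ hφ => ?_⟩,
    ⟨fun h S hS hgS _ φ hφ => h S hS hgS φ hφ, fun h S _ hgS φ hφ => ?_⟩⟩
  · exact h _ (primePowComponents_inv S) (hgen hgS)
      (fun _ => isPrimePow_orderOf_of_mem_primePowComponents) φ
      (hφ.toPrimePowComponents φ.injective)
  · exact h _ (primePowComponents_inv S) (hgen hgS)
      (fun _ => isPrimePow_orderOf_of_mem_primePowComponents) φ
      (hφ.toPrimePowComponents φ.injective)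
end
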